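/- arXiv:1502.00169 — 4 statements merged into one kernel-verified Lean document; each statement's English description precedes it below -/
import Mathlib

section
/- Let ε > 0 be a constant and let p = p_n ∈ (0,1) satisfy p_n·√n/(log n)² → ∞ and eventually p_n ≤ 1−ε. Then there exists a sequence g_n → 0 such that for all sufficiently large n, r_n = ⌈(1/p̂_n)·log( p̂_n·n / ((log(p_n·n))²·(1+g_n)) )⌉, where p̂_n = log(1/(1−p_n)). -/
open Filter Real Topology

noncomputable section

/-- The weight (probability) of a particular graph under the Erdős–Rényi measure `G(n,p)`. -/
def erWeight (n : ℕ) (p : ℝ) (G : SimpleGraph (Fin n)) : ℝ :=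
  p ^ G.edgeSet.ncard * (1 - p) ^ (n.choose 2 - G.edgeSet.ncard)

/-- Probability of a set of graphs under the Erdős–Rényi measure `G(n,p)`. -/
def erProb (n : ℕ) (p : ℝ) (S : Set (SimpleGraph (Fin n))) : ℝ :=
  ∑ G : SimpleGraph (Fin n), S.indicator (erWeight n p) G

/-- Expectation of a real random variable on `G(n,p)`. -/
def erExp (n : ℕ) (p : ℝ) (X : SimpleGraph (Fin n) → ℝ) : ℝ :=
  ∑ G : SimpleGraph (Fin n), erWeight n p G * X G

/-- Variance of a real random variable on `G(n,p)`. -/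
def erVar (n : ℕ) (p : ℝ) (X : SimpleGraph (Fin n) → ℝ) : ℝ :=
  erExp n p (fun G => (X G - erExp n p X) ^ 2)

/-- Probability of a set of graphs under the uniform measure `G(n,m)` on graphs with `m` edges. -/
def gnmProb (n m : ℕ) (S : Set (SimpleGraph (Fin n))) : ℝ :=
  (∑ G : SimpleGraph (Fin n),
      (S ∩ {G : SimpleGraph (Fin n) | G.edgeSet.ncard = m}).indicator 1 G) /
  (∑ G : SimpleGraph (Fin n),
      ({G : SimpleGraph (Fin n) | G.edgeSet.ncard = m} : Set (SimpleGraph (Fin n))).indicator 1 G)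

/-- `D` is a dominating set of `G`. -/
def isDomSet {V : Type*} (G : SimpleGraph V) (D : Set V) : Prop :=
  ∀ v ∉ D, ∃ u ∈ D, G.Adj u v

/-- The domination number of a finite graph. -/
def domNumber {V : Type*} [Fintype V] (G : SimpleGraph V) : ℕ :=
  sInf {k | ∃ D : Finset V, D.card = k ∧ isDomSet G ↑D}

/-- The bondage number of a finite graph. -/
def bondage {V : Type*} [Fintype V] (G : SimpleGraph V) : ℕ :=
  sInf {k | ∃ B : Finset (Sym2 V), B.card = k ∧ (↑B : Set (Sym2 V)) ⊆ G.edgeSet ∧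
    domNumber G < domNumber (G.deleteEdges ↑B)}

/-- Maximum degree of a finite graph. -/
def maxDeg {V : Type*} [Fintype V] (G : SimpleGraph V) : ℕ :=
  Finset.univ.sup fun v => (G.neighborSet v).ncard

/-- `f(n,k,p) = C(n,k)·(1−(1−p)^k)^(n−k)`, the expected number of dominating sets of size `k`. -/
def fdom (n k : ℕ) (p : ℝ) : ℝ := (n.choose k : ℝ) * (1 - (1 - p) ^ k) ^ (n - k)

/-- `r = r_n = min {k : f(n,k,p) > 1/(p n)}`. -/
def rdom (n : ℕ) (p : ℝ) : ℕ := sInf {k : ℕ | fdom n k p > 1 / (p * n)}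

/-- Number of dominating sets of cardinality `k`. -/
def numDomSets (n k : ℕ) (G : SimpleGraph (Fin n)) : ℕ :=
  {D : Finset (Fin n) | D.card = k ∧ isDomSet G ↑D}.ncard

/-- Number of dominating sets of cardinality `k` containing the vertex `v`. -/
def numDomSetsVia (n k : ℕ) (v : Fin n) (G : SimpleGraph (Fin n)) : ℕ :=
  {D : Finset (Fin n) | D.card = k ∧ v ∈ D ∧ isDomSet G ↑D}.ncard

/-- `W_i`: number of ordered pairs of dominating sets of cardinality `k` intersecting in `i`
vertices. -/
def numDomPairs (n k i : ℕ) (G : SimpleGraph (Fin n)) : ℕ :=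
  {DD : Finset (Fin n) × Finset (Fin n) | DD.1.card = k ∧ DD.2.card = k ∧
    isDomSet G ↑DD.1 ∧ isDomSet G ↑DD.2 ∧ (DD.1 ∩ DD.2).card = i}.ncard

/-- The graph `G` with the edge `uv` added (if not already present). -/
def addEdge {V : Type*} (G : SimpleGraph V) (u v : V) : SimpleGraph V :=
  G ⊔ SimpleGraph.fromEdgeSet {s(u, v)}

/-- `D̂_j(u,v)`: the number of sets `D` of cardinality `k` with `v ∈ D`, `u ∉ D`, dominating in
`G + uv`, such that `u` has exactly `j` neighbours in `D` in `G + uv`. -/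
def dhat {V : Type*} [Fintype V] (G : SimpleGraph V) (k : ℕ) (u v : V) (j : ℕ) : ℕ :=
  {D : Finset V | D.card = k ∧ v ∈ D ∧ u ∉ D ∧ isDomSet (addEdge G u v) ↑D ∧
    ((addEdge G u v).neighborSet u ∩ ↑D).ncard = j}.ncard

/-- The damage of the directed pair `(u,v)`. -/
def damage {V : Type*} [Fintype V] (G : SimpleGraph V) (k : ℕ) (u v : V) : ℝ :=
  ∑ j ∈ Finset.Icc 1 k, (dhat G k u v j : ℝ) / j

/-- The heavy damage of the directed pair `(u,v)` with threshold `L`. -/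
def heavyDamage {V : Type*} [Fintype V] (G : SimpleGraph V) (k L : ℕ) (u v : V) : ℝ :=
  ∑ j ∈ Finset.Icc 1 L, (dhat G k u v j : ℝ) / j

/-- `P(Bin(m,p) = j)`. -/
def binPMF (m : ℕ) (p : ℝ) (j : ℕ) : ℝ := (m.choose j : ℝ) * p ^ j * (1 - p) ^ (m - j)

/-- `P(Bin(m,p) < t)`. -/
def binLT (m : ℕ) (p : ℝ) (t : ℕ) : ℝ := ∑ j ∈ Finset.range t, binPMF m p j

/-- `Q_i = Σ_{j=0}^{min(i−1,L−1)} P(Bin(i−1,p)=j)·(P(Bin(r−i,p) < L−j))²`. -/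
def Qdef (r L : ℕ) (p : ℝ) (i : ℕ) : ℝ :=
  ∑ j ∈ Finset.range (min i L), binPMF (i - 1) p j * (binLT (r - i) p (L - j)) ^ 2

/-- A set of naturals is dense if `|I ∩ {1,…,n}|/n → 1`. -/
def DenseInNat (I : Set ℕ) : Prop :=
  Tendsto (fun n : ℕ => ((I ∩ Set.Icc 1 n).ncard : ℝ) / n) atTop (𝓝 1)

end

/-!
Write `q = 1 - p`, `P = p̂ = log (1/q)` (so `q ^ k = exp (-k P)`) and `L = log (p n)`.
By `(n/k)^k ≤ C(n,k) ≤ (e n/k)^k` and `exp (-x/(1-x)) ≤ 1 - x ≤ exp (-x)`,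
`log f(n,k,p) = k log (n/k) - n q^k + o(L²/P)` in the relevant range `k P ≈ L`, where
`k log (n/k) ≈ L²/P`. Hence, for fixed `η > 0` and large `n`, `f(n,k,p) ≤ 1/(p n) = e^(-L)`
as soon as `n q^k P ≥ (1 + η) L²`, while `f(n,k,p) > 1/(p n)` at the first `k` with
`n q^k P ≤ (1 - η) L²`. So `n q^r P / L²` and `n q^(r-1) P / L²` approach `1` from the
correct sides, and choosing `1 + g_n` between them turns these two inequalities into the
ceiling formula.
-/

lemma pow_le_choose_mul_pow (k n : ℕ) (hkn : k ≤ n) : n ^ k ≤ n.choose k * k ^ k := by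
  induction k generalizing n with
  | zero => simp
  | succ k ih =>
    obtain ⟨m, rfl⟩ : ∃ m, n = m + 1 := ⟨n - 1, by omega⟩
    have hstep : (m + 1) ^ k ≤ m.choose k * (k + 1) ^ k := by
      rcases Nat.eq_zero_or_pos k with rfl | hk
      · simp
      refine le_of_mul_le_mul_right ?_ (Nat.pow_pos hk : 0 < k ^ k)
      calc (m + 1) ^ k * k ^ k = ((m + 1) * k) ^ k := (mul_pow _ _ _).symm
        _ ≤ (m * (k + 1)) ^ k := Nat.pow_le_pow_left (by nlinarith) _
        _ ≤ m.choose k * k ^ k * (k + 1) ^ k := by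
            rw [mul_pow]; exact Nat.mul_le_mul_right _ (ih m (by omega))
        _ = m.choose k * (k + 1) ^ k * k ^ k := by ring
    calc (m + 1) ^ (k + 1) = (m + 1) * (m + 1) ^ k := by ring
      _ ≤ (m + 1) * (m.choose k * (k + 1) ^ k) := Nat.mul_le_mul_left _ hstep
      _ = (m + 1).choose (k + 1) * (k + 1) ^ (k + 1) := by
          rw [← mul_assoc, Nat.add_one_mul_choose_eq]; ring

lemma div_pow_le_choose {n k : ℕ} (hkn : k ≤ n) : ((n : ℝ) / k) ^ k ≤ n.choose k := by
  rcases Nat.eq_zero_or_pos k with rfl | hk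
  · simp
  rw [div_pow, div_le_iff₀ (by positivity)]
  exact_mod_cast pow_le_choose_mul_pow k n hkn

open Nat in
lemma choose_le_exp_one_mul_div_pow (n k : ℕ) : (n.choose k : ℝ) ≤ (exp 1 * n / k) ^ k := by
  have hkk : (0 : ℝ) < (k : ℝ) ^ k := by
    rcases Nat.eq_zero_or_pos k with rfl | hk
    · simp
    · positivity
  calc (n.choose k : ℝ) ≤ (n : ℝ) ^ k / k ! := Nat.choose_le_pow_div k n
    _ = ((k : ℝ) ^ k / k !) * ((n : ℝ) ^ k / (k : ℝ) ^ k) := by field_simp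
    _ ≤ exp k * ((n : ℝ) ^ k / (k : ℝ) ^ k) := by
        gcongr; exact pow_div_factorial_le_exp (x := (k : ℝ)) (Nat.cast_nonneg k) k
    _ = (exp 1 * n / k) ^ k := by rw [← exp_one_pow, mul_div_assoc, mul_pow, div_pow]

lemma exp_neg_div_one_sub_le_one_sub {x : ℝ} (hx : x < 1) : exp (-(x / (1 - x))) ≤ 1 - x := by
  have h := one_sub_inv_le_log_of_pos (sub_pos.mpr hx)
  rw [← le_log_iff_exp_le (sub_pos.mpr hx)]
  have : 1 - (1 - x)⁻¹ = -(x / (1 - x)) := by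
    field_simp [(sub_pos.mpr hx).ne']; ring
  linarith

lemma monotoneOn_mul_one_add_log_sub_log (N : ℝ) :
    MonotoneOn (fun t => t * (1 + log N - log t)) (Set.Ioc 0 N) := by
  intro a ⟨ha, _⟩ b ⟨hb, hbN⟩ hab
  have h1 : a * (log b - log a) ≤ b - a := by
    have := mul_le_mul_of_nonneg_left
      (log_le_sub_one_of_pos (show 0 < b / a by positivity)) ha.le
    rw [log_div hb.ne' ha.ne'] at this
    calc a * (log b - log a) ≤ a * (b / a - 1) := this
      _ = b - a := by field_simp
  have h2 : log b ≤ log N := log_le_log hb hbN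
  show a * (1 + log N - log a) ≤ b * (1 + log N - log b)
  nlinarith [sub_nonneg.mpr hab]

noncomputable def phat (p : ℝ) : ℝ := log (1 / (1 - p))

section phat

variable {p : ℝ}

lemma phat_eq_neg_log : phat p = -log (1 - p) := by rw [phat, one_div, log_inv]

lemma pow_eq_exp_neg_mul_phat (hp : p < 1) (k : ℕ) : (1 - p) ^ k = exp (-(k * phat p)) := by
  rw [phat_eq_neg_log, mul_neg, neg_neg, exp_nat_mul, exp_log (sub_pos.mpr hp)]

lemma le_phat (hp : p < 1) : p ≤ phat p := by
  have := log_le_sub_one_of_pos (sub_pos.mpr hp)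
  rw [phat_eq_neg_log]; linarith

lemma phat_pos (hp0 : 0 < p) (hp1 : p < 1) : 0 < phat p := hp0.trans_le (le_phat hp1)

lemma phat_le_div (hp : p < 1) : phat p ≤ p / (1 - p) := by
  have h := log_le_sub_one_of_pos (one_div_pos.mpr (sub_pos.mpr hp))
  have : 1 / (1 - p) - 1 = p / (1 - p) := by field_simp [(sub_pos.mpr hp).ne']; ring
  rw [phat]; linarith

lemma phat_le_log_inv {ε : ℝ} (hε : 0 < ε) (hp : p ≤ 1 - ε) : phat p ≤ log (1 / ε) :=
  log_le_log (one_div_pos.mpr (by linarith)) (one_div_le_one_div_of_le hε (by linarith))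

lemma log_phat_mul_le {x : ℝ} (hp0 : 0 < p) (hp1 : p < 1) (hx : 0 < x) :
    log (phat p * x) ≤ log (p * x) + phat p := by
  have hq : 0 < 1 - p := sub_pos.mpr hp1
  have hle : phat p * x ≤ p * x * (1 / (1 - p)) := by
    calc phat p * x ≤ p / (1 - p) * x := by gcongr; exact phat_le_div hp1
      _ = p * x * (1 / (1 - p)) := by ring
  calc log (phat p * x) ≤ log (p * x * (1 / (1 - p))) :=
        log_le_log (mul_pos (phat_pos hp0 hp1) hx) hle
    _ = log (p * x) + phat p := by rw [log_mul (by positivity) (by positivity), phat]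

end phat

lemma fdom_le_exp {n k : ℕ} {p : ℝ} (hk : 1 ≤ k) (hkn : k ≤ n) (hp0 : 0 ≤ p) (hp1 : p ≤ 1) :
    fdom n k p ≤ exp (k * (1 + log n - log k) - (n - k) * (1 - p) ^ k) := by
  have hk0 : (0 : ℝ) < k := by exact_mod_cast hk
  have hn0 : (0 : ℝ) < n := by exact_mod_cast hk.trans hkn
  have hx1 : (1 - p) ^ k ≤ 1 := pow_le_one₀ (by linarith) (by linarith)
  have hchoose : (n.choose k : ℝ) ≤ exp (k * (1 + log n - log k)) := by
    rw [exp_nat_mul, exp_sub, exp_add, exp_log hn0, exp_log hk0]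
    exact choose_le_exp_one_mul_div_pow n k
  have hpow : (1 - (1 - p) ^ k) ^ (n - k) ≤ exp (-((n - k) * (1 - p) ^ k)) := by
    calc (1 - (1 - p) ^ k) ^ (n - k) ≤ exp (-(1 - p) ^ k) ^ (n - k) :=
          pow_le_pow_left₀ (by linarith) (one_sub_le_exp_neg _) _
      _ = exp (-((n - k) * (1 - p) ^ k)) := by
          rw [← exp_nat_mul, Nat.cast_sub hkn]; ring_nf
  calc fdom n k p ≤ exp (k * (1 + log n - log k)) * exp (-((n - k) * (1 - p) ^ k)) :=
        mul_le_mul hchoose hpow (pow_nonneg (sub_nonneg.mpr hx1) _) (exp_pos _).le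
    _ = _ := by rw [← exp_add]; ring_nf

lemma exp_le_fdom {n k : ℕ} {p : ℝ} (hk : 1 ≤ k) (hkn : k ≤ n) (hp0 : 0 < p) (hp1 : p ≤ 1) :
    exp (k * (log n - log k) - n * ((1 - p) ^ k / (1 - (1 - p) ^ k))) ≤ fdom n k p := by
  set x := (1 - p) ^ k
  have hk0 : (0 : ℝ) < k := by exact_mod_cast hk
  have hn0 : (0 : ℝ) < n := by exact_mod_cast hk.trans hkn
  have hx0 : 0 ≤ x := pow_nonneg (by linarith) k
  have hx1 : x < 1 := pow_lt_one₀ (by linarith) (by linarith) (by omega : k ≠ 0)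
  have hchoose : exp (k * (log n - log k)) ≤ n.choose k := by
    rw [exp_nat_mul, exp_sub, exp_log hn0, exp_log hk0]
    exact div_pow_le_choose hkn
  have hpow : exp (-(n * (x / (1 - x)))) ≤ (1 - x) ^ (n - k) := by
    calc exp (-(n * (x / (1 - x)))) ≤ exp (-(x / (1 - x))) ^ (n - k) := by
          rw [← exp_nat_mul]
          gcongr
          rw [mul_neg, neg_le_neg_iff]
          exact mul_le_mul_of_nonneg_right (by exact_mod_cast Nat.sub_le n k)
            (div_nonneg hx0 (by linarith))
      _ ≤ (1 - x) ^ (n - k) :=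
          pow_le_pow_left₀ (exp_pos _).le (exp_neg_div_one_sub_le_one_sub hx1) _
  calc exp (k * (log n - log k) - n * (x / (1 - x)))
        = exp (k * (log n - log k)) * exp (-(n * (x / (1 - x)))) := by
          rw [← exp_add]; ring_nf
    _ ≤ fdom n k p := mul_le_mul hchoose hpow (exp_pos _).le (Nat.cast_nonneg _)

section powers

variable {p a b : ℝ}

lemma mul_pow_le_iff (hp : p < 1) (ha : 0 < a) (hb : 0 < b) (k : ℕ) :
    a * (1 - p) ^ k ≤ b ↔ log a - log b ≤ k * phat p := by
  rw [pow_eq_exp_neg_mul_phat hp, ← log_le_log_iff (by positivity) hb, log_mul ha.ne'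
    (exp_pos _).ne', log_exp]
  constructor <;> intro <;> linarith

lemma lt_mul_pow_iff (hp : p < 1) (ha : 0 < a) (hb : 0 < b) (k : ℕ) :
    b < a * (1 - p) ^ k ↔ k * phat p < log a - log b := by
  rw [← not_le, mul_pow_le_iff hp ha hb, not_le]

lemma ceil_one_div_phat_mul_log_div_eq (hp0 : 0 < p) (hp1 : p < 1) (ha : 0 < a) (hb : 0 < b)
    {r : ℕ} (hup : a * (1 - p) ^ r ≤ b) (hlo : b < a * (1 - p) ^ (r - 1)) :
    ⌈1 / phat p * log (a / b)⌉ = r := by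
  cases r with
  | zero => simp at hup hlo; linarith
  | succ r =>
    rw [mul_pow_le_iff hp1 ha hb] at hup
    rw [Nat.add_sub_cancel, lt_mul_pow_iff hp1 ha hb] at hlo
    have hP := phat_pos hp0 hp1
    rw [Int.ceil_eq_iff, log_div ha.ne' hb.ne', one_div_mul_eq_div, lt_div_iff₀ hP,
      div_le_iff₀ hP]
    push_cast at hup ⊢
    constructor <;> linarith

end powers

lemma exists_mul_pow_le_lt_mul_pow_pred {a c q : ℝ} (hq1 : q < 1) (hc : 0 < c)
    (hca : c < a) : ∃ k : ℕ, 1 ≤ k ∧ a * q ^ k ≤ c ∧ c < a * q ^ (k - 1) := by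
  classical
  have hex : ∃ k : ℕ, a * q ^ k ≤ c := by
    obtain ⟨k, hk⟩ := exists_pow_lt_of_lt_one (div_pos hc (hc.trans hca)) hq1
    exact ⟨k, by rw [lt_div_iff₀ (hc.trans hca)] at hk; linarith⟩
  have hk1 : 1 ≤ Nat.find hex := by
    by_contra h0
    have := Nat.find_spec hex
    rw [show Nat.find hex = 0 by omega] at this
    simp at this; linarith
  exact ⟨Nat.find hex, hk1, Nat.find_spec hex, not_le.mp (Nat.find_min hex (by omega))⟩

lemma fdom_zero_right {n : ℕ} (hn : n ≠ 0) (p : ℝ) : fdom n 0 p = 0 := by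
  simp [fdom, hn]

noncomputable def rdomRatio (n : ℕ) (p : ℝ) (k : ℕ) : ℝ :=
  phat p * n * (1 - p) ^ k / log (p * n) ^ 2

/-- Everything about `(n, p)` that the estimates below use, for a fixed `η`: under the
hypotheses of the theorem it holds for all large `n` because `p̂ = O(1)`, `log (p n) → ∞` and
`log (p n) ^ 2 = o(p̂ n)`. -/
structure RdomRegime (η : ℝ) (n : ℕ) (p : ℝ) : Prop where
  eta_pos : 0 < η
  eta_le_half : η ≤ 1 / 2
  p_pos : 0 < p
  p_lt_one : p < 1
  exp_one_le_log : exp 1 ≤ log (p * n)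
  phat_le : phat p ≤ η / 16 * log (p * n)
  log_four_mul_le : log (4 * log (p * n)) ≤ η / 16 * log (p * n)
  sq_log_le : log (p * n) ^ 2 ≤ η / 16 * (phat p * n)

namespace RdomRegime

variable {η : ℝ} {n : ℕ} {p : ℝ}

lemma one_le_log (h : RdomRegime η n p) : 1 ≤ log (p * n) := by
  linarith [h.exp_one_le_log, add_one_le_exp (1 : ℝ)]

lemma sq_log_pos (h : RdomRegime η n p) : 0 < log (p * n) ^ 2 :=
  pow_pos (one_pos.trans_le h.one_le_log) 2

lemma one_lt_mul (h : RdomRegime η n p) : 1 < p * n :=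
  (log_pos_iff (mul_nonneg h.p_pos.le n.cast_nonneg)).mp (by linarith [h.one_le_log])

lemma natCast_pos (h : RdomRegime η n p) : (0 : ℝ) < n :=
  pos_of_mul_pos_right (one_pos.trans h.one_lt_mul) h.p_pos.le

lemma phat_pos (h : RdomRegime η n p) : 0 < phat p := _root_.phat_pos h.p_pos h.p_lt_one

lemma log_le_log_phat_mul (h : RdomRegime η n p) : log (p * n) ≤ log (phat p * n) :=
  log_le_log (one_pos.trans h.one_lt_mul)
    (mul_le_mul_of_nonneg_right (le_phat h.p_lt_one) n.cast_nonneg)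

lemma log_phat_mul_le (h : RdomRegime η n p) :
    log (phat p * n) ≤ (1 + η / 16) * log (p * n) := by
  linarith [_root_.log_phat_mul_le h.p_pos h.p_lt_one h.natCast_pos, h.phat_le]

lemma log_phat_mul_le_mul (h : RdomRegime η n p) :
    log (phat p * n) ≤ η / 8 * (phat p * n) := by
  have hL := h.one_le_log
  nlinarith [h.log_phat_mul_le, h.sq_log_le, h.eta_le_half, h.eta_pos]

lemma mul_one_add_log_sub_log_le (h : RdomRegime η n p) {t : ℝ} (ht0 : 0 < t)
    (ht : t * phat p ≤ log (phat p * n)) :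
    t * (1 + log n - log t) ≤ (1 + η / 4) * (log (p * n) ^ 2 / phat p) := by
  have hP : 0 < phat p := h.phat_pos
  have hn := h.natCast_pos
  have hLM := h.log_le_log_phat_mul
  have hMn := h.log_phat_mul_le_mul
  have hML := h.log_phat_mul_le
  have hL := h.one_le_log
  have hMsum : log (phat p * n) = log (phat p) + log n := log_mul hP.ne' hn.ne'
  have hexp := h.exp_one_le_log
  have hη := h.eta_pos
  have hη2 := h.eta_le_half
  set L := log (p * n)
  set P := phat p
  set M := log (P * n)
  have hM0 : 0 < M := by linarith
  have hKn : M / P ≤ n := by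
    rw [div_le_iff₀ hP]; nlinarith
  have htK : t ≤ M / P := (le_div_iff₀ hP).mpr ht
  have hlogM : 1 ≤ log M := by
    rw [le_log_iff_exp_le hM0]; linarith
  have hM2 : M ^ 2 ≤ (1 + η / 4) * L ^ 2 := by
    nlinarith [mul_le_mul hML hML hM0.le (by positivity),
      mul_le_mul_of_nonneg_right hη2 (by positivity : 0 ≤ η * L ^ 2)]
  calc t * (1 + log n - log t) ≤ M / P * (1 + log n - log (M / P)) :=
        monotoneOn_mul_one_add_log_sub_log n ⟨ht0, htK.trans hKn⟩ ⟨div_pos hM0 hP, hKn⟩ htK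
    _ = M / P * (1 + M - log M) := by
        rw [log_div hM0.ne' hP.ne', show log P = M - log n by linarith]; ring
    _ ≤ M / P * M := by gcongr; linarith
    _ = M ^ 2 / P := by ring
    _ ≤ (1 + η / 4) * (L ^ 2 / P) := by rw [← mul_div_assoc]; gcongr

lemma fdom_le_one_div (h : RdomRegime η n p) {k : ℕ}
    (hk : (1 + η) * log (p * n) ^ 2 ≤ phat p * n * (1 - p) ^ k) : fdom n k p ≤ 1 / (p * n) := by
  have hP : 0 < phat p := h.phat_pos
  have hn := h.natCast_pos
  have hL := h.one_le_log
  have hη := h.eta_pos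
  have hpn := h.one_lt_mul
  rcases Nat.eq_zero_or_pos k with rfl | hk1
  · rw [fdom_zero_right (by exact_mod_cast hn.ne')]
    exact (one_div_pos.mpr (one_pos.trans hpn)).le
  have hkM : k * phat p ≤ log (phat p * n) := by
    have := (lt_mul_pow_iff (a := phat p * n) h.p_lt_one (by positivity) one_pos k).mp
      (by nlinarith [one_le_pow₀ (n := 2) hL, mul_pos hη h.sq_log_pos])
    rw [log_one, sub_zero] at this
    exact this.le
  have hkn : (k : ℝ) ≤ η / 8 * n :=
    le_of_mul_le_mul_right (by nlinarith [h.log_phat_mul_le_mul]) hP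
  have hφ := h.mul_one_add_log_sub_log_le (t := k) (by positivity) hkM
  have hPL := h.phat_le
  have hη2 := h.eta_le_half
  set L := log (p * n)
  set P := phat p
  set x := (1 - p) ^ k
  have hx : 0 < x := pow_pos (sub_pos.mpr h.p_lt_one) k
  have hdecay : (1 + η / 2) * (L ^ 2 / P) ≤ (n - k) * x := by
    have h1 : (1 + η) * (L ^ 2 / P) ≤ n * x := by
      rw [← mul_div_assoc, div_le_iff₀ hP]; linarith
    nlinarith [mul_le_mul_of_nonneg_right hkn hx.le, mul_pos hη (by positivity : 0 < L ^ 2 / P)]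
  have hLP : L ≤ η / 4 * (L ^ 2 / P) := by
    rw [← mul_div_assoc, le_div_iff₀ hP]; nlinarith
  calc fdom n k p ≤ exp (k * (1 + log n - log k) - (n - k) * x) :=
        fdom_le_exp hk1 (by exact_mod_cast (show (k : ℝ) ≤ n by nlinarith)) h.p_pos.le
          h.p_lt_one.le
    _ ≤ exp (-L) := exp_le_exp.mpr (by linarith)
    _ = 1 / (p * n) := by rw [exp_neg, exp_log (one_pos.trans hpn), one_div]

lemma le_mul_log_sub_log (h : RdomRegime η n p) {k : ℕ} (hk1 : 1 ≤ k)
    (hlo : (1 - η / 8) * log (p * n) ≤ k * phat p) (hup : k * phat p ≤ 2 * log (phat p * n)) :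
    (1 - η / 4) * (log (p * n) ^ 2 / phat p) ≤ k * (log n - log k) := by
  have hP : 0 < phat p := h.phat_pos
  have hn := h.natCast_pos
  have hL := h.one_le_log
  have hLM := h.log_le_log_phat_mul
  have hML := h.log_phat_mul_le
  have hlog4 := h.log_four_mul_le
  have hη := h.eta_pos
  have hη2 := h.eta_le_half
  have hMsum : log (phat p * n) = log (phat p) + log n := log_mul hP.ne' hn.ne'
  set L := log (p * n)
  set P := phat p
  set M := log (P * n)
  have hk0 : (0 : ℝ) < k := by exact_mod_cast hk1
  have hlogk : log k ≤ log (2 * M) - log P := by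
    rw [← log_div (by linarith) hP.ne']
    exact log_le_log hk0 ((le_div_iff₀ hP).mpr hup)
  have hlog2M : log (2 * M) ≤ log (4 * L) := log_le_log (by linarith) (by nlinarith)
  have hgap : (1 - η / 16) * L ≤ log n - log k := by linarith
  have hkL : (1 - η / 8) * L / P ≤ k := (div_le_iff₀ hP).mpr hlo
  calc (1 - η / 4) * (L ^ 2 / P) ≤ (1 - η / 8) * (1 - η / 16) * (L ^ 2 / P) := by
        gcongr; nlinarith
    _ = (1 - η / 8) * L / P * ((1 - η / 16) * L) := by ring
    _ ≤ k * (log n - log k) := mul_le_mul hkL hgap (by nlinarith) hk0.le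

lemma mul_phat_bounds_of_threshold (h : RdomRegime η n p) {k : ℕ} (hk1 : 1 ≤ k)
    (hk : phat p * n * (1 - p) ^ k ≤ (1 - η) * log (p * n) ^ 2)
    (hk' : (1 - η) * log (p * n) ^ 2 < phat p * n * (1 - p) ^ (k - 1)) :
    (1 - η / 8) * log (p * n) ≤ k * phat p ∧ k * phat p ≤ 2 * log (phat p * n) := by
  have hL := h.one_le_log
  have hη := h.eta_pos
  have hPn : 0 < phat p * n := mul_pos h.phat_pos h.natCast_pos
  have hc1 : 1 ≤ (1 - η) * log (p * n) ^ 2 := by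
    nlinarith [h.exp_one_le_log, add_one_le_exp (1 : ℝ), h.eta_le_half]
  have hc0 : 0 < (1 - η) * log (p * n) ^ 2 := by linarith
  have hupper := (lt_mul_pow_iff h.p_lt_one hPn hc0 (k - 1)).mp hk'
  have hlower := (mul_pow_le_iff h.p_lt_one hPn hc0 k).mp hk
  rw [Nat.cast_sub hk1, Nat.cast_one] at hupper
  have hlogc : log ((1 - η) * log (p * n) ^ 2) ≤ 2 * log (4 * log (p * n)) := by
    calc log ((1 - η) * log (p * n) ^ 2) ≤ log ((4 * log (p * n)) ^ 2) :=
          log_le_log hc0 (by nlinarith)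
      _ = 2 * log (4 * log (p * n)) := by rw [log_pow]; norm_num
  have hlogc0 : 0 ≤ log ((1 - η) * log (p * n) ^ 2) := log_nonneg hc1
  have hLM := h.log_le_log_phat_mul
  have hPL := h.phat_le
  have hlog4 := h.log_four_mul_le
  constructor
  · linarith
  · nlinarith

lemma one_div_lt_fdom (h : RdomRegime η n p) {k : ℕ} (hk1 : 1 ≤ k)
    (hk : phat p * n * (1 - p) ^ k ≤ (1 - η) * log (p * n) ^ 2)
    (hk' : (1 - η) * log (p * n) ^ 2 < phat p * n * (1 - p) ^ (k - 1)) :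
    1 / (p * n) < fdom n k p := by
  have hP : 0 < phat p := h.phat_pos
  have hPn : 0 < phat p * n := mul_pos hP h.natCast_pos
  have hL := h.one_le_log
  have hpn := h.one_lt_mul
  have hη := h.eta_pos
  have hη2 := h.eta_le_half
  obtain ⟨hlo, hup⟩ := h.mul_phat_bounds_of_threshold hk1 hk hk'
  have hgain := h.le_mul_log_sub_log hk1 hlo hup
  have hkn : (k : ℝ) ≤ n := le_of_mul_le_mul_right (by nlinarith [h.log_phat_mul_le_mul]) hP
  have hsq := h.sq_log_le
  set L := log (p * n)
  set P := phat p
  set x := (1 - p) ^ k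
  have hx : x ≤ η / 16 := le_of_mul_le_mul_left (by nlinarith) hPn
  have hX : 0 < L ^ 2 / P := by positivity
  have hloss : n * (x / (1 - x)) ≤ (1 - η / 2) * (L ^ 2 / P) := by
    have hnx : n * x ≤ (1 - η) * (L ^ 2 / P) := by
      rw [← mul_div_assoc, le_div_iff₀ hP]; linarith
    rw [← mul_div_assoc, div_le_iff₀ (by linarith)]
    nlinarith [mul_le_mul_of_nonneg_right hx hX.le, mul_pos hη hX,
      mul_nonneg (mul_nonneg hη.le (pow_nonneg (sub_pos.mpr h.p_lt_one).le k)) hX.le]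
  calc 1 / (p * n) < 1 := (div_lt_one (by linarith)).mpr hpn
    _ ≤ exp (k * (log n - log k) - n * (x / (1 - x))) :=
        one_le_exp (by nlinarith [mul_pos hη hX])
    _ ≤ fdom n k p := exp_le_fdom hk1 (by exact_mod_cast hkn) h.p_pos h.p_lt_one.le

lemma rdom_bounds (h : RdomRegime η n p) :
    1 ≤ rdom n p ∧ phat p * n * (1 - p) ^ rdom n p < (1 + η) * log (p * n) ^ 2 ∧
      (1 - η) * log (p * n) ^ 2 < phat p * n * (1 - p) ^ (rdom n p - 1) := by
  have hpn := h.one_lt_mul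
  have hq0 : 0 < 1 - p := sub_pos.mpr h.p_lt_one
  have hc0 : 0 < (1 - η) * log (p * n) ^ 2 := by
    have := h.one_le_log; nlinarith [h.eta_le_half]
  have hcPn : (1 - η) * log (p * n) ^ 2 < phat p * n := by
    nlinarith [h.sq_log_le, h.eta_pos, h.eta_le_half, h.one_le_log, h.phat_pos, h.natCast_pos]
  obtain ⟨k, hk1, hk, hk'⟩ :=
    exists_mul_pow_le_lt_mul_pow_pred (by linarith [h.p_pos] : 1 - p < 1) hc0 hcPn
  have hfk : 1 / (p * n) < fdom n k p := h.one_div_lt_fdom hk1 hk hk'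
  have hrk : rdom n p ≤ k := Nat.sInf_le hfk
  have hfr : 1 / (p * n) < fdom n (rdom n p) p :=
    Nat.sInf_mem (s := {k | fdom n k p > 1 / (p * n)}) ⟨k, hfk⟩
  have hr1 : 1 ≤ rdom n p := by
    by_contra h0
    rw [show rdom n p = 0 by omega, fdom_zero_right (by exact_mod_cast h.natCast_pos.ne')] at hfr
    exact hfr.not_ge (one_div_pos.mpr (one_pos.trans hpn)).le
  refine ⟨hr1, lt_of_not_ge fun hle => (h.fdom_le_one_div hle).not_gt hfr, hk'.trans_le ?_⟩
  exact mul_le_mul_of_nonneg_left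
    (pow_le_pow_of_le_one hq0.le (by linarith [h.p_pos]) (by omega))
    (mul_pos h.phat_pos h.natCast_pos).le

lemma rdomRatio_bounds (h : RdomRegime η n p) :
    rdomRatio n p (rdom n p) < 1 + η ∧ 1 - η < rdomRatio n p (rdom n p - 1) ∧
      rdomRatio n p (rdom n p) < rdomRatio n p (rdom n p - 1) := by
  obtain ⟨hr1, hup, hlo⟩ := h.rdom_bounds
  have hL2 := h.sq_log_pos
  refine ⟨(div_lt_iff₀ hL2).mpr hup, (lt_div_iff₀ hL2).mpr hlo,
    div_lt_div_of_pos_right (mul_lt_mul_of_pos_left ?_ (mul_pos h.phat_pos h.natCast_pos)) hL2⟩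
  exact pow_lt_pow_right_of_lt_one₀ (sub_pos.mpr h.p_lt_one) (by linarith [h.p_pos]) (by omega)

lemma rdom_eq_ceil (h : RdomRegime η n p) {v : ℝ} (hAv : rdomRatio n p (rdom n p) ≤ v)
    (hvB : v < rdomRatio n p (rdom n p - 1)) :
    (rdom n p : ℤ) = ⌈1 / phat p * log (phat p * n / (log (p * n) ^ 2 * v))⌉ := by
  have hL2 := h.sq_log_pos
  have hPn : 0 < phat p * n := mul_pos h.phat_pos h.natCast_pos
  rw [rdomRatio, div_le_iff₀ hL2] at hAv
  rw [rdomRatio, lt_div_iff₀ hL2] at hvB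
  have hv0 : 0 < v :=
    pos_of_mul_pos_left ((mul_pos hPn (pow_pos (sub_pos.mpr h.p_lt_one) _)).trans_le hAv) hL2.le
  exact (ceil_one_div_phat_mul_log_div_eq h.p_pos h.p_lt_one hPn (mul_pos hL2 hv0)
    (by linarith) (by linarith)).symm

end RdomRegime

lemma eventually_log_four_mul_le {c : ℝ} (hc : 0 < c) :
    ∀ᶠ x : ℝ in atTop, log (4 * x) ≤ c * x := by
  have h4 : Tendsto (fun x : ℝ => 4 * x) atTop atTop := tendsto_id.const_mul_atTop four_pos
  filter_upwards [(isLittleO_log_id_atTop.comp_tendsto h4).def (div_pos hc four_pos),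
    eventually_ge_atTop 0] with x hx hx0
  simp only [Function.comp_apply, id, norm_eq_abs,
    abs_of_nonneg (by positivity : 0 ≤ 4 * x)] at hx
  linarith [le_abs_self (log (4 * x)), show c / 4 * (4 * x) = c * x by ring]

section sequence

variable {p : ℕ → ℝ}

lemma eventually_sqrt_mul_sq_log_le
    (hple : Tendsto (fun n : ℕ => p n * √n / log n ^ 2) atTop atTop) :
    ∀ᶠ n : ℕ in atTop, √n * log n ^ 2 ≤ p n * n := by
  have hlog : Tendsto (fun n : ℕ => log n) atTop atTop :=
    tendsto_log_atTop.comp tendsto_natCast_atTop_atTop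
  filter_upwards [hple.eventually_ge_atTop 1, hlog.eventually_ge_atTop 1] with n h1 h2
  rw [le_div_iff₀ (by positivity), one_mul] at h1
  calc √n * log n ^ 2 ≤ √n * (p n * √n) := by gcongr
    _ = p n * n := by rw [mul_left_comm, mul_self_sqrt n.cast_nonneg]

lemma tendsto_log_mul_atTop
    (hple : Tendsto (fun n : ℕ => p n * √n / log n ^ 2) atTop atTop) :
    Tendsto (fun n : ℕ => log (p n * n)) atTop atTop := by
  have hlog : Tendsto (fun n : ℕ => log n) atTop atTop :=
    tendsto_log_atTop.comp tendsto_natCast_atTop_atTop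
  refine tendsto_atTop_mono' atTop ?_ (hlog.atTop_div_const two_pos)
  filter_upwards [eventually_sqrt_mul_sq_log_le hple, hlog.eventually_ge_atTop 1,
    eventually_gt_atTop 0] with n h1 h2 hn
  have hsqrt : 0 < √(n : ℝ) := sqrt_pos.mpr (by exact_mod_cast hn)
  rw [← log_sqrt n.cast_nonneg]
  exact log_le_log hsqrt (le_trans (le_mul_of_one_le_right hsqrt.le (by nlinarith)) h1)

lemma eventually_rdomRegime {ε : ℝ} (hε : 0 < ε) (hp01 : ∀ n, p n ∈ Set.Ioo (0 : ℝ) 1)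
    (hple : Tendsto (fun n : ℕ => p n * √n / log n ^ 2) atTop atTop)
    (hpe : ∀ᶠ n : ℕ in atTop, p n ≤ 1 - ε) {η : ℝ} (hη : 0 < η) (hη2 : η ≤ 1 / 2) :
    ∀ᶠ n : ℕ in atTop, RdomRegime η n (p n) := by
  have hL := tendsto_log_mul_atTop hple
  have hsqrt : Tendsto (fun n : ℕ => √(n : ℝ)) atTop atTop :=
    tendsto_sqrt_atTop.comp tendsto_natCast_atTop_atTop
  filter_upwards [hpe, eventually_sqrt_mul_sq_log_le hple, hL.eventually_ge_atTop (exp 1),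
    hL.eventually_ge_atTop (16 / η * log (1 / ε)), hL.eventually (eventually_log_four_mul_le
    (by positivity : 0 < η / 16)), hsqrt.eventually_ge_atTop (16 / η), eventually_gt_atTop 0]
    with n hpε hpn hexp hεL hlog4 hsqrtn hn
  obtain ⟨hp0, hp1⟩ := hp01 n
  have hn0 : (0 : ℝ) < n := by exact_mod_cast hn
  have hLℓ : log (p n * n) ≤ log n :=
    log_le_log (by positivity) (by nlinarith)
  have hL0 : 0 ≤ log (p n * n) := (exp_pos 1).le.trans hexp
  refine ⟨hη, hη2, hp0, hp1, hexp, ?_, hlog4, ?_⟩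
  · rw [div_mul_eq_mul_div, div_le_iff₀ hη] at hεL
    linarith [phat_le_log_inv hε hpε]
  · rw [div_le_iff₀ hη] at hsqrtn
    have hphat := mul_le_mul_of_nonneg_right (le_phat hp1) hn0.le
    nlinarith [pow_le_pow_left₀ hL0 hLℓ 2]

end sequence

lemma exists_tendsto_between {A B : ℕ → ℝ} {c : ℝ} (hAB : ∀ᶠ n in atTop, A n < B n)
    (hA : ∀ η > 0, ∀ᶠ n in atTop, A n < c + η) (hB : ∀ η > 0, ∀ᶠ n in atTop, c - η < B n) :
    ∃ v : ℕ → ℝ, Tendsto v atTop (𝓝 c) ∧ ∀ᶠ n in atTop, A n ≤ v n ∧ v n < B n := by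
  have hδ : Tendsto (fun n : ℕ => 1 / ((n : ℝ) + 1)) atTop (𝓝 0) :=
    tendsto_one_div_add_atTop_nhds_zero_nat
  refine ⟨fun n => max (A n) (min c (B n - 1 / ((n : ℝ) + 1))), tendsto_order.2 ⟨?_, ?_⟩, ?_⟩
  · intro a ha
    filter_upwards [hB ((c - a) / 2) (by linarith), hδ.eventually (gt_mem_nhds
      (by linarith : (0 : ℝ) < (c - a) / 2))] with n hBn hδn
    exact lt_max_of_lt_right (lt_min ha (by linarith))
  · intro a ha
    filter_upwards [hA (a - c) (by linarith)] with n hAn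
    exact max_lt (by linarith) ((min_le_left _ _).trans_lt ha)
  · filter_upwards [hAB] with n hn
    refine ⟨le_max_left _ _, max_lt hn ((min_le_right _ _).trans_lt ?_)⟩
    have : 0 < 1 / ((n : ℝ) + 1) := by positivity
    linarith

/-- If `p_n √n / log² n → ∞` and eventually `p_n ≤ 1−ε`, then
`r_n = ⌈(1/p̂)·log(p̂ n / (log²(p_n n)(1+g_n)))⌉` for some sequence `g_n → 0`, where
`p̂ = log(1/(1−p_n))`. -/
theorem rdom_formula (ε : ℝ) (hε : 0 < ε) (p : ℕ → ℝ)
    (hp01 : ∀ n, p n ∈ Set.Ioo (0 : ℝ) 1)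
    (hple : Tendsto (fun n : ℕ => p n * Real.sqrt n / (Real.log n) ^ 2) atTop atTop)
    (hpe : ∀ᶠ n : ℕ in atTop, p n ≤ 1 - ε) :
    ∃ g : ℕ → ℝ, Tendsto g atTop (𝓝 0) ∧ ∀ᶠ n : ℕ in atTop,
      (rdom n (p n) : ℤ) =
        ⌈(1 / Real.log (1 / (1 - p n))) *
          Real.log (Real.log (1 / (1 - p n)) * n /
            ((Real.log (p n * n)) ^ 2 * (1 + g n)))⌉ := by
  have hregime (η : ℝ) (hη : 0 < η) : ∀ᶠ n in atTop, RdomRegime (min η (1 / 2)) n (p n) :=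
    eventually_rdomRegime hε hp01 hple hpe (lt_min hη one_half_pos) (min_le_right _ _)
  obtain ⟨v, hv, hvAB⟩ := exists_tendsto_between (c := 1)
    (A := fun n => rdomRatio n (p n) (rdom n (p n)))
    (B := fun n => rdomRatio n (p n) (rdom n (p n) - 1))
    ((hregime 1 one_pos).mono fun n hn => hn.rdomRatio_bounds.2.2)
    (fun η hη => (hregime η hη).mono fun n hn =>
      hn.rdomRatio_bounds.1.trans_le (by linarith [min_le_left η (1 / 2)]))
    (fun η hη => (hregime η hη).mono fun n hn =>
      (show 1 - η ≤ 1 - min η (1 / 2) by linarith [min_le_left η (1 / 2)]).trans_lt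
        hn.rdomRatio_bounds.2.1)
  refine ⟨fun n => v n - 1, by simpa using hv.sub_const 1, ?_⟩
  filter_upwards [hregime 1 one_pos, hvAB] with n hn ⟨hAv, hvB⟩
  rw [add_sub_cancel]
  exact hn.rdom_eq_ceil hAv hvB
end

section
/- Let n ≥ 2, p ∈ (0,1), let k be an integer with 1 ≤ k ≤ n−1, and let (u,v) be an ordered pair of distinct vertices of the random graph G(n,p). For j ≥ 1, let D̂_j(u,v) be the number of sets D of cardinality k with v ∈ D and u ∉ D that are dominating sets of the graph G(n,p)+uv (the random graph with the edge uv added) and such that u has exactly j neighbours in D in G(n,p)+uv. Then E[ Σ_{j=1}^{k} D̂_j(u,v)/j ] = ((n−k)/(p·n·(n−1)))·f(n,k,p). -/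
/-!
Summing `D̂_j(u,v)/j` over `j` rewrites the damage as `∑_D 1[D dominates G + uv] / |N(u) ∩ D|`
(neighbourhood in `G + uv`) over the `k`-sets `D` with `v ∈ D` and `u ∉ D`. For fixed `D` this
integrand is a product over the vertices `w ∉ D` of functions of the edges between `w` and `D`: for
`w ≠ u` the indicator that `w` has a neighbour in `D`, of probability `1 - (1 - p)^k`, and for `u`
the factor `1 / (1 + X)`, where `X ~ Bin(k - 1, p)` counts the neighbours of `u` in `D \ {v}`. These
edge sets are disjoint, so the expectation factorises, and `E[1 / (1 + X)] = (1 - (1 - p)^k) / (k p)`.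
Multiplying by the `C(n - 2, k - 1)` choices of `D` and using
`n (n - 1) C(n - 2, k - 1) = k (n - k) C(n, k)` gives the formula.
-/

open Filter Real Topology

open Finset

section BernoulliProduct

variable {α β ι κ : Type*} [Fintype α] [DecidableEq α] [Fintype β] [DecidableEq β]
  [Fintype ι] [DecidableEq ι] [Fintype κ] [DecidableEq κ] (p : ℝ)

noncomputable def bernoulliWeight (f : α → Bool) : ℝ := ∏ a, if f a then p else 1 - p

theorem sum_bernoulliWeight_mul_prod (H : α → Bool → ℝ) :
    ∑ f : α → Bool, bernoulliWeight p f * ∏ a, H a (f a) =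
      ∏ a, (p * H a true + (1 - p) * H a false) := by
  have h (a : α) : p * H a true + (1 - p) * H a false =
      ∑ c : Bool, (if c then p else 1 - p) * H a c := by simp
  simp_rw [h, Fintype.prod_sum, bernoulliWeight, prod_mul_distrib]

theorem sum_bernoulliWeight_mul_prod_comp (ε : β ↪ α) (H : β → Bool → ℝ) :
    ∑ f : α → Bool, bernoulliWeight p f * ∏ b, H b (f (ε b)) =
      ∏ b, (p * H b true + (1 - p) * H b false) := by
  -- each fibre of `ε` has at most one point, and an empty fibre contributes `p + (1 - p) = 1`
  have hfiber (a : α) : p * ∏ b ∈ univ.filter (ε · = a), H b true +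
      (1 - p) * ∏ b ∈ univ.filter (ε · = a), H b false =
        ∏ b ∈ univ.filter (ε · = a), (p * H b true + (1 - p) * H b false) := by
    by_cases ha : ∃ b, ε b = a
    · obtain ⟨b, rfl⟩ := ha
      have : univ.filter (ε · = ε b) = {b} := by ext; simp [ε.injective.eq_iff]
      rw [this, prod_singleton, prod_singleton, prod_singleton]
    · have : univ.filter (ε · = a) = ∅ := by ext b; simpa using fun h => ha ⟨b, h⟩
      simp [this]
  have hprod (f : α → Bool) : ∏ b, H b (f (ε b)) =
      ∏ a, ∏ b ∈ univ.filter (ε · = a), H b (f a) := by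
    rw [← prod_fiberwise univ ε]
    exact prod_congr rfl fun a _ => prod_congr rfl fun b hb => by rw [(mem_filter.1 hb).2]
  simp_rw [hprod, sum_bernoulliWeight_mul_prod p (fun a c => ∏ b ∈ univ.filter (ε · = a), H b c),
    hfiber, prod_fiberwise]

theorem sum_bernoulliWeight_mul_comp (ε : β ↪ α) (F : (β → Bool) → ℝ) :
    ∑ f : α → Bool, bernoulliWeight p f * F (f ∘ ε) =
      ∑ g : β → Bool, bernoulliWeight p g * F g := by
  have hF (f : α → Bool) : F (f ∘ ε) = ∑ g, F g * ∏ b, if f (ε b) = g b then 1 else 0 := by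
    simp_rw [Fintype.prod_boole, mul_ite, mul_one, mul_zero]
    simp [← funext_iff, Function.comp_def]
  simp_rw [hF, mul_sum]
  rw [sum_comm]
  refine Fintype.sum_congr _ _ fun g => ?_
  simp_rw [mul_left_comm (bernoulliWeight p _) (F g), ← mul_sum]
  rw [sum_bernoulliWeight_mul_prod_comp p ε (fun b c => if c = g b then 1 else 0), mul_comm]
  congr 1
  refine Fintype.prod_congr _ _ fun b => ?_
  cases g b <;> simp

theorem sum_bernoulliWeight_mul_prod_curry (F : ι → (κ → Bool) → ℝ) :
    ∑ g : ι × κ → Bool, bernoulliWeight p g * ∏ i, F i (fun k => g (i, k)) =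
      ∏ i, ∑ h : κ → Bool, bernoulliWeight p h * F i h := by
  rw [Fintype.prod_sum, ← (Equiv.curry ι κ Bool).symm.sum_comp]
  refine Fintype.sum_congr _ _ fun x => ?_
  rw [bernoulliWeight, Fintype.prod_prod_type, prod_mul_distrib]
  rfl

theorem sum_bernoulliWeight_mul_indicator_exists :
    ∑ h : β → Bool, bernoulliWeight p h * (if ∃ b, h b then 1 else 0) =
      1 - (1 - p) ^ Fintype.card β := by
  have hind (h : β → Bool) :
      (if ∃ b, h b then 1 else 0 : ℝ) = 1 - ∏ b, if h b then 0 else 1 := by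
    by_cases hh : ∃ b, h b
    · obtain ⟨b, hb⟩ := hh
      rw [if_pos ⟨b, hb⟩, prod_eq_zero (mem_univ b) (by simp [hb]), sub_zero]
    · simp_all
  have hone := sum_bernoulliWeight_mul_prod p (fun (_ : β) (_ : Bool) => (1 : ℝ))
  have hnone := sum_bernoulliWeight_mul_prod p (fun (_ : β) (c : Bool) => if c then (0 : ℝ) else 1)
  simp only [prod_const_one, mul_one, if_true, mul_zero, zero_add, Bool.false_eq_true, if_false,
    add_sub_cancel, prod_const, card_univ] at hone hnone
  simp_rw [hind, mul_sub, mul_one, sum_sub_distrib, hone, hnone]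

theorem sum_bernoulliWeight_mul_card (G : ℕ → ℝ) :
    ∑ h : β → Bool, bernoulliWeight p h * G #{b | h b} =
      ∑ i ∈ range (Fintype.card β + 1),
        (Fintype.card β).choose i * p ^ i * (1 - p) ^ (Fintype.card β - i) * G i := by
  let e : Finset β ≃ (β → Bool) :=
    { toFun s b := decide (b ∈ s)
      invFun h := {b | h b}
      left_inv s := by ext; simp
      right_inv h := by ext; simp }
  have hweight (s : Finset β) :
      bernoulliWeight p (e s) = p ^ #s * (1 - p) ^ (Fintype.card β - #s) := by
    simp [e, bernoulliWeight, prod_ite, filter_not, card_univ_sdiff]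
  have hcount (s : Finset β) : #{b | e s b} = #s := by simp [e]
  simp_rw [← e.sum_comp, hweight, hcount, ← powerset_univ,
    sum_powerset_apply_card (fun m => p ^ m * (1 - p) ^ (Fintype.card β - m) * G m), card_univ,
    nsmul_eq_mul, mul_assoc]

theorem sum_bernoulliWeight_mul_card_filter (s : Finset β) (G : ℕ → ℝ) :
    ∑ h : β → Bool, bernoulliWeight p h * G #{b ∈ s | h b} =
      ∑ i ∈ range (#s + 1), (#s).choose i * p ^ i * (1 - p) ^ (#s - i) * G i := by
  have h := sum_bernoulliWeight_mul_comp p (Function.Embedding.subtype (· ∈ s))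
    fun g => G #{b | g b}
  rw [sum_bernoulliWeight_mul_card, Fintype.card_coe] at h
  rw [← h]
  refine Fintype.sum_congr _ _ fun h => ?_
  congr 2
  rw [card_filter, card_filter, ← sum_attach s]
  rfl

end BernoulliProduct

theorem sum_choose_mul_inv_succ (p : ℝ) (m : ℕ) :
    (m + 1) * p * ∑ i ∈ range (m + 1), m.choose i * p ^ i * (1 - p) ^ (m - i) * ((i : ℝ) + 1)⁻¹ =
      1 - (1 - p) ^ (m + 1) := by
  have hterm (i : ℕ) : (m + 1) * p * (m.choose i * p ^ i * (1 - p) ^ (m - i) * ((i : ℝ) + 1)⁻¹) =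
      p ^ (i + 1) * (1 - p) ^ (m - i) * (m + 1).choose (i + 1) := by
    have h : ((m : ℝ) + 1) * m.choose i = (m + 1).choose (i + 1) * (i + 1) := by
      exact_mod_cast Nat.add_one_mul_choose_eq m i
    rw [pow_succ]
    field_simp
    linear_combination p ^ i * (1 - p) ^ (m - i) * p * h
  have hbinom := add_pow p (1 - p) (m + 1)
  rw [add_sub_cancel, one_pow, sum_range_succ'] at hbinom
  simp only [Nat.reduceSubDiff, pow_zero, tsub_zero, one_mul, Nat.choose_zero_right, Nat.cast_one,
    mul_one] at hbinom
  rw [mul_sum, sum_congr rfl fun i _ => hterm i]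
  linarith

theorem add_two_mul_add_one_mul_choose_eq (l r : ℕ) :
    (l + r + 2) * (l + r + 1) * (l + r).choose l =
      (l + 1) * (r + 1) * (l + r + 2).choose (l + 1) := by
  have h1 := Nat.add_one_mul_choose_eq (l + r) l
  have h2 := Nat.choose_mul_succ_eq (l + r + 1) (l + 1)
  rw [show l + r + 1 + 1 - (l + 1) = r + 1 by omega] at h2
  calc (l + r + 2) * (l + r + 1) * (l + r).choose l
      = (l + r + 2) * ((l + r + 1) * (l + r).choose l) := by ring
    _ = (l + 1) * ((l + r + 1).choose (l + 1) * (l + r + 1 + 1)) := by rw [h1]; ring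
    _ = _ := by rw [h2]; ring

theorem sum_Icc_card_filter_div_eq_sum {ι : Type*} (s : Finset ι) (P : ι → Prop)
    [DecidablePred P] (c : ι → ℕ) (k : ℕ) (hc : ∀ x ∈ s, c x ≤ k) :
    ∑ j ∈ Icc 1 k, (#{x ∈ s | P x ∧ c x = j} : ℝ) / j =
      ∑ x ∈ s, (if P x then 1 else 0) / (c x : ℝ) := by
  simp_rw [card_filter, Nat.cast_sum, sum_div]
  rw [sum_comm]
  refine sum_congr rfl fun x hx => ?_
  have hterm : ∀ j ∈ Icc 1 k, ((if P x ∧ c x = j then 1 else 0 : ℕ) : ℝ) / j =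
      if c x = j then (if P x then 1 else 0) / (c x : ℝ) else 0 := by
    intro j _
    by_cases hj : c x = j <;> simp [hj]
  rw [sum_congr rfl hterm, sum_ite_eq, ite_eq_left_iff]
  -- `c x ∉ Icc 1 k` forces `c x = 0`, and then the right-hand side is `1 / 0 = 0`
  intro hck
  have : c x = 0 := by
    have := hc x hx
    simp only [mem_Icc, not_and, not_le] at hck
    omega
  simp [this]

section EdgeFunctions

variable {V : Type*}

def graphOfEdgeFun (f : {e : Sym2 V // ¬e.IsDiag} → Bool) : SimpleGraph V :=
  SimpleGraph.fromEdgeSet {e | ∃ h : ¬e.IsDiag, f ⟨e, h⟩}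

theorem graphOfEdgeFun_adj (f : {e : Sym2 V // ¬e.IsDiag} → Bool) {a b : V} (hab : a ≠ b) :
    (graphOfEdgeFun f).Adj a b ↔ f ⟨s(a, b), Sym2.mk_isDiag_iff.not.2 hab⟩ = true := by
  simp [graphOfEdgeFun, hab]

theorem edgeSet_graphOfEdgeFun (f : {e : Sym2 V // ¬e.IsDiag} → Bool) :
    (graphOfEdgeFun f).edgeSet = Subtype.val '' {e | f e} := by
  ext e
  simp [graphOfEdgeFun, SimpleGraph.edgeSet_fromEdgeSet]

noncomputable def edgeFunEquiv : ({e : Sym2 V // ¬e.IsDiag} → Bool) ≃ SimpleGraph V where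
  toFun := graphOfEdgeFun
  invFun G e := by classical exact decide (e.1 ∈ G.edgeSet)
  left_inv f := by
    funext e
    simp [edgeSet_graphOfEdgeFun, e.2]
  right_inv G := by
    ext a b
    simp only [graphOfEdgeFun, SimpleGraph.fromEdgeSet_adj, Set.mem_ofPred_eq, exists_prop,
      Sym2.mk_isDiag_iff, SimpleGraph.mem_edgeSet, decide_eq_true_eq, ne_eq]
    exact ⟨fun h => h.1.2, fun h => ⟨⟨h.ne, h⟩, h.ne⟩⟩

def crossEdge (D : Finset V) : {w // w ∉ D} × D ↪ {e : Sym2 V // ¬e.IsDiag} where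
  toFun x := ⟨s(x.1.1, x.2.1), Sym2.mk_isDiag_iff.not.2 fun h => x.1.2 (h ▸ x.2.2)⟩
  inj' := by
    rintro ⟨⟨w, hw⟩, ⟨d, hd⟩⟩ ⟨⟨w', hw'⟩, ⟨d', hd'⟩⟩ h
    rcases Sym2.eq_iff.1 (Subtype.ext_iff.1 h) with ⟨rfl, rfl⟩ | ⟨rfl, -⟩
    · rfl
    · exact absurd hd' hw

theorem graphOfEdgeFun_adj_crossEdge {D : Finset V} (f : {e : Sym2 V // ¬e.IsDiag} → Bool)
    (w : {w // w ∉ D}) (d : D) :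
    (graphOfEdgeFun f).Adj w d ↔ f (crossEdge D (w, d)) = true :=
  graphOfEdgeFun_adj f fun h => w.2 (by rw [h]; exact d.2)

end EdgeFunctions

theorem erWeight_graphOfEdgeFun (n : ℕ) (p : ℝ) (f : {e : Sym2 (Fin n) // ¬e.IsDiag} → Bool) :
    erWeight n p (graphOfEdgeFun f) = bernoulliWeight p f := by
  have hcard : (graphOfEdgeFun f).edgeSet.ncard = #{e | f e} := by
    rw [edgeSet_graphOfEdgeFun, Set.ncard_image_of_injective _ Subtype.val_injective,
      ← Set.ncard_coe_finset]
    simp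
  have hcompl : #{e | ¬f e} = n.choose 2 - #{e | f e} := by
    rw [filter_not, card_univ_sdiff, Sym2.card_subtype_not_diag, Fintype.card_fin]
  rw [erWeight, bernoulliWeight, prod_ite, prod_const, prod_const, hcard, hcompl]

theorem erExp_eq_sum_bernoulliWeight (n : ℕ) (p : ℝ) (X : SimpleGraph (Fin n) → ℝ) :
    erExp n p X = ∑ f, bernoulliWeight p f * X (graphOfEdgeFun f) := by
  rw [erExp, ← edgeFunEquiv.sum_comp]
  simp only [edgeFunEquiv, Equiv.coe_fn_mk, erWeight_graphOfEdgeFun]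

section AddEdge

variable {V : Type*} {u v : V} {D : Finset V}

theorem addEdge_adj (G : SimpleGraph V) (u v a b : V) :
    (addEdge G u v).Adj a b ↔ G.Adj a b ∨ a ≠ b ∧ s(a, b) = s(u, v) := by
  simp [addEdge, and_comm]

theorem isDomSet_addEdge_iff (G : SimpleGraph V) (hv : v ∈ D) (hu : u ∉ D) :
    isDomSet (addEdge G u v) ↑D ↔ ∀ w ∉ D, w ≠ u → ∃ d ∈ D, G.Adj w d := by
  simp only [isDomSet, mem_coe, addEdge_adj]
  refine forall₂_congr fun w hw => ⟨?_, fun h => ?_⟩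
  · rintro ⟨d, hd, hadj | ⟨-, hdw⟩⟩ hwu
    · exact ⟨d, hd, hadj.symm⟩
    · rcases Sym2.eq_iff.1 hdw with ⟨rfl, -⟩ | ⟨-, rfl⟩ <;> contradiction
  · by_cases hwu : w = u
    · subst hwu
      exact ⟨v, hv, Or.inr ⟨fun h => hu (h ▸ hv), Sym2.eq_swap⟩⟩
    · obtain ⟨d, hd, hadj⟩ := h hwu
      exact ⟨d, hd, Or.inl hadj.symm⟩

theorem ncard_neighborSet_addEdge_inter [DecidableEq V] (G : SimpleGraph V) [DecidableRel G.Adj]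
    (hv : v ∈ D) (hu : u ∉ D) :
    ((addEdge G u v).neighborSet u ∩ ↑D).ncard = #{d ∈ D | d ≠ v ∧ G.Adj u d} + 1 := by
  have huv : u ≠ v := fun h => hu (h ▸ hv)
  have : (addEdge G u v).neighborSet u ∩ ↑D = insert v ↑{d ∈ D | d ≠ v ∧ G.Adj u d} := by
    ext d
    by_cases hdv : d = v
    · subst hdv
      simp [addEdge_adj, hv, huv]
    · simp [addEdge_adj, hdv, huv, and_comm]
  rw [this, Set.ncard_insert_of_notMem (by simp), Set.ncard_coe_finset]

end AddEdge

section RowFactor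

variable {V : Type*} [DecidableEq V] {u v : V} {D : Finset V}

-- `v` is a neighbour of `u` in `G + uv`, hence the `+ 1`
noncomputable def domRowFactor (D : Finset V) (u v w : V) (h : D → Bool) : ℝ :=
  if w = u then ((#{d : D | (d : V) ≠ v ∧ h d} : ℝ) + 1)⁻¹ else if ∃ d, h d then 1 else 0

theorem sum_bernoulliWeight_mul_domRowFactor_self (p : ℝ) (hv : v ∈ D) {l : ℕ}
    (hD : #D = l + 1) :
    ∑ h : D → Bool, bernoulliWeight p h * domRowFactor D u v u h =
      ∑ i ∈ range (l + 1), l.choose i * p ^ i * (1 - p) ^ (l - i) * ((i : ℝ) + 1)⁻¹ := by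
  have hcard : #{d : D | (d : V) ≠ v} = l := by
    rw [show ({d : D | (d : V) ≠ v} : Finset D) = univ.erase ⟨v, hv⟩ by
      ext; simp [Subtype.ext_iff]]
    simp [hD]
  simp only [domRowFactor, if_true]
  rw [← hcard, ← sum_bernoulliWeight_mul_card_filter p _ fun i => ((i : ℝ) + 1)⁻¹]
  simp only [filter_filter]

theorem sum_bernoulliWeight_mul_domRowFactor_of_ne (p : ℝ) {w : V} (hw : w ≠ u) :
    ∑ h : D → Bool, bernoulliWeight p h * domRowFactor D u v w h = 1 - (1 - p) ^ #D := by
  simp only [domRowFactor, if_neg hw]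
  rw [sum_bernoulliWeight_mul_indicator_exists, Fintype.card_coe]

end RowFactor

section Damage

variable {V : Type*} [Fintype V] [DecidableEq V] {u v : V} {D : Finset V}

open Classical in
theorem indicator_isDomSet_div_ncard_eq_prod (f : {e : Sym2 V // ¬e.IsDiag} → Bool)
    (hv : v ∈ D) (hu : u ∉ D) :
    (if isDomSet (addEdge (graphOfEdgeFun f) u v) ↑D then (1 : ℝ) else 0) /
        ((addEdge (graphOfEdgeFun f) u v).neighborSet u ∩ ↑D).ncard =
      ∏ w : {w // w ∉ D}, domRowFactor D u v w fun d => f (crossEdge D (w, d)) := by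
  have hcount : #{d ∈ D | d ≠ v ∧ (graphOfEdgeFun f).Adj u d} =
      #{d : D | (d : V) ≠ v ∧ f (crossEdge D (⟨u, hu⟩, d))} := by
    rw [card_filter, card_filter, ← sum_attach D, univ_eq_attach]
    exact sum_congr rfl fun d _ =>
      if_congr (and_congr_right' (graphOfEdgeFun_adj_crossEdge f ⟨u, hu⟩ d)) rfl rfl
  have hdominated : (∀ w ∈ ({⟨u, hu⟩}ᶜ : Finset {w // w ∉ D}), ∃ d, f (crossEdge D (w, d))) ↔
      ∀ w ∉ D, w ≠ u → ∃ d ∈ D, (graphOfEdgeFun f).Adj w d := by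
    refine ⟨fun h w hw hwu => ?_, fun h w hw => ?_⟩
    · obtain ⟨d, hd⟩ := h ⟨w, hw⟩ (by simpa [Subtype.ext_iff] using hwu)
      exact ⟨d, d.2, (graphOfEdgeFun_adj_crossEdge f ⟨w, hw⟩ d).2 hd⟩
    · obtain ⟨d, hd, hadj⟩ := h w w.2 (by simpa [Subtype.ext_iff] using hw)
      exact ⟨⟨d, hd⟩, (graphOfEdgeFun_adj_crossEdge f w ⟨d, hd⟩).1 hadj⟩
  have hrow : ∀ w : {w // w ∉ D}, w ∈ ({⟨u, hu⟩}ᶜ : Finset {w // w ∉ D}) →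
      domRowFactor D u v w (fun d => f (crossEdge D (w, d))) =
        if ∃ d, f (crossEdge D (w, d)) then 1 else 0 := fun w hw => by
    rw [domRowFactor, if_neg fun h => mem_compl.1 hw (mem_singleton.2 (Subtype.ext h))]
  rw [isDomSet_addEdge_iff _ hv hu, ncard_neighborSet_addEdge_inter _ hv hu,
    Fintype.prod_eq_mul_prod_compl ⟨u, hu⟩, prod_congr rfl hrow, domRowFactor, if_pos rfl, hcount]
  simp only [prod_boole, hdominated]
  push_cast
  rw [div_eq_mul_inv, mul_comm]
  congr

open Classical in
theorem sum_bernoulliWeight_mul_indicator_isDomSet_div (p : ℝ) (hv : v ∈ D) (hu : u ∉ D)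
    {l : ℕ} (hD : #D = l + 1) :
    ∑ f, bernoulliWeight p f *
        ((if isDomSet (addEdge (graphOfEdgeFun f) u v) ↑D then (1 : ℝ) else 0) /
          ((addEdge (graphOfEdgeFun f) u v).neighborSet u ∩ ↑D).ncard) =
      (1 - (1 - p) ^ (l + 1)) ^ (Fintype.card V - (l + 2)) *
        ∑ i ∈ range (l + 1), l.choose i * p ^ i * (1 - p) ^ (l - i) * ((i : ℝ) + 1)⁻¹ := by
  calc _ = ∑ f, bernoulliWeight p f *
        ∏ w : {w // w ∉ D}, domRowFactor D u v w fun d => f (crossEdge D (w, d)) := by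
        simp_rw [indicator_isDomSet_div_ncard_eq_prod _ hv hu]
    _ = ∑ g : {w // w ∉ D} × D → Bool, bernoulliWeight p g *
        ∏ w : {w // w ∉ D}, domRowFactor D u v w fun d => g (w, d) :=
        sum_bernoulliWeight_mul_comp p (crossEdge D) fun g =>
          ∏ w : {w // w ∉ D}, domRowFactor D u v w fun d => g (w, d)
    _ = ∏ w : {w // w ∉ D}, ∑ h : D → Bool, bernoulliWeight p h * domRowFactor D u v w h :=
        sum_bernoulliWeight_mul_prod_curry p _
    _ = _ := by
      rw [Fintype.prod_eq_mul_prod_compl ⟨u, hu⟩, sum_bernoulliWeight_mul_domRowFactor_self p hv hD,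
        prod_congr rfl fun w hw => sum_bernoulliWeight_mul_domRowFactor_of_ne p
          fun h => mem_compl.1 hw (mem_singleton.2 (Subtype.ext h)),
        prod_const, card_compl, card_singleton, Fintype.card_subtype_compl, Fintype.card_coe, hD,
        Nat.sub_sub, mul_comm]

open Classical in
theorem sum_Icc_dhat_div_eq_sum (G : SimpleGraph V) (k : ℕ) (u v : V) :
    ∑ j ∈ Icc 1 k, (dhat G k u v j : ℝ) / j =
      ∑ D ∈ (powersetCard k univ).filter (fun D => v ∈ D ∧ u ∉ D),
        (if isDomSet (addEdge G u v) ↑D then 1 else 0) /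
          (((addEdge G u v).neighborSet u ∩ ↑D).ncard : ℝ) := by
  have hdhat (j : ℕ) : dhat G k u v j =
      #(((powersetCard k univ).filter (fun D => v ∈ D ∧ u ∉ D)).filter fun D : Finset V =>
        isDomSet (addEdge G u v) ↑D ∧ ((addEdge G u v).neighborSet u ∩ ↑D).ncard = j) := by
    rw [dhat, ← Set.ncard_coe_finset]
    congr 1
    ext D
    simp [and_assoc]
  simp_rw [hdhat]
  refine sum_Icc_card_filter_div_eq_sum _ _ _ k fun D hD => ?_
  rw [← (mem_powersetCard.1 (mem_filter.1 hD).1).2, ← Set.ncard_coe_finset]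
  exact Set.ncard_inter_le_ncard_right _ _ (Set.toFinite _)

theorem card_filter_powersetCard_mem_notMem (huv : u ≠ v) (k : ℕ) :
    #((powersetCard (k + 1) univ).filter (fun D => v ∈ D ∧ u ∉ D)) =
      (Fintype.card V - 2).choose k := by
  have himage : (powersetCard (k + 1) univ).filter (fun D => v ∈ D ∧ u ∉ D) =
      (powersetCard k ((univ.erase u).erase v)).image (insert v) := by
    ext D
    simp only [mem_filter, mem_image, mem_powersetCard, subset_univ, true_and]
    constructor
    · rintro ⟨hcard, hv, hu⟩
      refine ⟨D.erase v, ⟨fun x hx => ?_, by rw [card_erase_of_mem hv, hcard]; rfl⟩,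
        insert_erase hv⟩
      rw [mem_erase] at hx ⊢
      exact ⟨hx.1, mem_erase.2 ⟨fun h => hu (h ▸ hx.2), mem_univ x⟩⟩
    · rintro ⟨A, ⟨hA, rfl⟩, rfl⟩
      have hvA : v ∉ A := fun h => (mem_erase.1 (hA h)).1 rfl
      have huA : u ∉ A := fun h => (mem_erase.1 (mem_erase.1 (hA h)).2).1 rfl
      exact ⟨card_insert_of_notMem hvA, mem_insert_self v A,
        fun h => (mem_insert.1 h).elim huv huA⟩
  have hinj : Set.InjOn (insert v)
      (powersetCard k ((univ.erase u).erase v) : Set (Finset V)) := by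
    intro A hA B hB h
    have hv : ∀ C ∈ powersetCard k ((univ.erase u).erase v), v ∉ C := fun C hC h =>
      (mem_erase.1 ((mem_powersetCard.1 hC).1 h)).1 rfl
    rw [← erase_insert (hv A hA), h, erase_insert (hv B hB)]
  rw [himage, card_image_of_injOn hinj, card_powersetCard,
    card_erase_of_mem (mem_erase.2 ⟨huv.symm, mem_univ v⟩), card_erase_of_mem (mem_univ u),
    card_univ, Nat.sub_sub]

end Damage

theorem expected_damage_general (n : ℕ) (p : ℝ) (hp : p ∈ Set.Ioo (0 : ℝ) 1)
    (k : ℕ) (hk1 : 1 ≤ k) (hk2 : k ≤ n - 1) (u v : Fin n) (huv : u ≠ v) :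
    erExp n p (fun G => ∑ j ∈ Finset.Icc 1 k, (dhat G k u v j : ℝ) / j) =
      ((n : ℝ) - k) / (p * n * ((n : ℝ) - 1)) * fdom n k p := by
  classical
  -- with `k = l + 1` and `n = k + (r + 1)` every natural-number subtraction below is exact
  obtain ⟨l, rfl⟩ : ∃ l, k = l + 1 := ⟨k - 1, by omega⟩
  obtain ⟨r, rfl⟩ : ∃ r, n = l + 1 + (r + 1) := ⟨n - l - 2, by omega⟩
  rw [erExp_eq_sum_bernoulliWeight]
  simp_rw [sum_Icc_dhat_div_eq_sum, mul_sum]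
  rw [sum_comm, sum_congr rfl fun D hD => sum_bernoulliWeight_mul_indicator_isDomSet_div p
      (mem_filter.1 hD).2.1 (mem_filter.1 hD).2.2 (mem_powersetCard.1 (mem_filter.1 hD).1).2,
    sum_const, card_filter_powersetCard_mem_notMem huv,
    nsmul_eq_mul, fdom, Fintype.card_fin, Nat.add_sub_cancel_left,
    show l + 1 + (r + 1) - (l + 2) = r by omega,
    pow_succ (1 - (1 - p) ^ (l + 1)) r, ← sum_choose_mul_inv_succ p l]
  generalize ∑ i ∈ range (l + 1), l.choose i * p ^ i * (1 - p) ^ (l - i) * ((i : ℝ) + 1)⁻¹ = S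
  have hchoose : ((l : ℝ) + r + 2) * (l + r + 1) * (l + r).choose l =
      (l + 1) * (r + 1) * (l + r + 2).choose (l + 1) := by
    exact_mod_cast add_two_mul_add_one_mul_choose_eq l r
  have hp0 : p ≠ 0 := hp.1.ne'
  rw [show l + 1 + (r + 1) - 2 = l + r by omega, show l + 1 + (r + 1) = l + r + 2 by ring]
  push_cast
  rw [show (l : ℝ) + r + 2 - 1 = l + r + 1 by ring, show (l : ℝ) + r + 2 - (l + 1) = r + 1 by ring]
  field_simp
  linear_combination (S * ((l + 1) * p * S) ^ r) * hchoose

/-- The expected damage of a directed pair `(u,v)`: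
`E[Σ_{j=1}^{k} D̂_j(u,v)/j] = ((n−k)/(p n (n−1))) f(n,k,p)`. -/
theorem expected_damage (n : ℕ) (hn : 2 ≤ n) (p : ℝ) (hp : p ∈ Set.Ioo (0 : ℝ) 1)
    (k : ℕ) (hk1 : 1 ≤ k) (hk2 : k ≤ n - 1) (u v : Fin n) (huv : u ≠ v) :
    erExp n p (fun G => ∑ j ∈ Finset.Icc 1 k, (dhat G k u v j : ℝ) / j) =
      ((n : ℝ) - k) / (p * n * ((n : ℝ) - 1)) * fdom n k p :=
  expected_damage_general n p hp k hk1 hk2 u v huv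
end

section
/- Let G = (V,E) be a finite simple graph and let r be a positive integer. For an ordered pair (u,v) of distinct vertices of V and j ≥ 1, let D̂_j(u,v) be the number of sets D ⊆ V of cardinality r with v ∈ D and u ∉ D that are dominating sets of G+uv (the graph G with the edge uv added, if not already present) and such that u has exactly j neighbours in D in G+uv; let Z(u,v) = Σ_{j=1}^{r} D̂_j(u,v)/j. For a set A of unordered pairs of distinct vertices, let Z_A = Σ_{{u,v}∈A} (Z(u,v) + Z(v,u)), and let Y_A be the number of dominating sets of G of cardinality r that are not dominating sets of G−A (the graph G with all edges belonging to A removed). Then Y_A ≤ Z_A. -/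
open Filter Real Topology

noncomputable section

/-!
Every dominating set `D` of `G` that stops dominating in `G − A` contributes a total weight of
at least one to `Z_A`: some `u ∉ D` loses all of its `j ≥ 1` neighbours `v ∈ D`, every edge
`uv` lies in `A`, and for each of them `D` is counted in `D̂_j(u,v)` (adding the edge `uv`
changes nothing), with weight `1/j`. Splitting each `Z(u,v)` into the weights of the
individual sets `D` and exchanging the order of summation gives `Y_A ≤ Z_A`.
-/

open Finset

section Symmetrize

variable {V : Type*}

def symmetrize (f : V → V → ℝ) : Sym2 V → ℝ :=
  Sym2.lift ⟨fun u v => f u v + f v u, fun _ _ => add_comm _ _⟩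

@[simp]
lemma symmetrize_mk (f : V → V → ℝ) (u v : V) : symmetrize f s(u, v) = f u v + f v u := rfl

lemma symmetrize_nonneg {f : V → V → ℝ} (hf : ∀ u v, 0 ≤ f u v) (e : Sym2 V) :
    0 ≤ symmetrize f e := by
  induction e using Sym2.inductionOn with
  | hf u v => exact add_nonneg (hf u v) (hf v u)

lemma le_symmetrize_mk {f : V → V → ℝ} (hf : ∀ u v, 0 ≤ f u v) (u v : V) :
    f u v ≤ symmetrize f s(u, v) :=
  le_add_of_nonneg_right (hf v u)

lemma symmetrize_sum {ι : Type*} (s : Finset ι) (f : ι → V → V → ℝ) (e : Sym2 V) :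
    symmetrize (fun u v => ∑ i ∈ s, f i u v) e = ∑ i ∈ s, symmetrize (f i) e := by
  induction e using Sym2.inductionOn with
  | hf u v => simp only [symmetrize_mk, sum_add_distrib]

end Symmetrize

lemma addEdge_eq_self {V : Type*} {G : SimpleGraph V} {u v : V} (h : G.Adj u v) :
    addEdge G u v = G := by
  refine sup_eq_left.2 fun a b hab => ?_
  rw [SimpleGraph.fromEdgeSet_adj, Set.mem_singleton_iff, Sym2.eq_iff] at hab
  rcases hab.1 with ⟨rfl, rfl⟩ | ⟨rfl, rfl⟩
  exacts [h, h.symm]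

section Damage

variable {V : Type*} (G : SimpleGraph V) (r : ℕ)

def dhatSet (u v : V) (j : ℕ) : Set (Finset V) :=
  {D | D.card = r ∧ v ∈ D ∧ u ∉ D ∧ isDomSet (addEdge G u v) ↑D ∧
    ((addEdge G u v).neighborSet u ∩ ↑D).ncard = j}

open Classical in
noncomputable def damageWeight (D : Finset V) (u v : V) : ℝ :=
  ∑ j ∈ Icc 1 r, if D ∈ dhatSet G r u v j then (j : ℝ)⁻¹ else 0

lemma damageWeight_nonneg (D : Finset V) (u v : V) : 0 ≤ damageWeight G r D u v :=
  sum_nonneg fun _ _ => by split <;> positivity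

lemma damage_eq_sum_damageWeight [Fintype V] (u v : V) :
    damage G r u v = ∑ D : Finset V, damageWeight G r D u v := by
  classical
  simp only [damage, damageWeight]
  rw [sum_comm]
  refine sum_congr rfl fun j _ => ?_
  have hcount :
      (dhat G r u v j : ℝ) = ∑ D : Finset V, if D ∈ dhatSet G r u v j then 1 else 0 := by
    rw [sum_boole, dhat, ← dhatSet, Set.ncard_eq_toFinset_card']
    congr 2
    ext
    simp
  rw [hcount, sum_div]
  exact sum_congr rfl fun D _ => by split <;> simp

variable {G r}

lemma inv_ncard_le_damageWeight {D : Finset V} {u v : V} (hcard : D.card = r)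
    (hdom : isDomSet G ↑D) (hu : u ∉ D) (hv : v ∈ D) (huv : G.Adj u v) :
    ((G.neighborSet u ∩ ↑D).ncard : ℝ)⁻¹ ≤ damageWeight G r D u v := by
  classical
  set j := (G.neighborSet u ∩ ↑D).ncard
  have hmem : D ∈ dhatSet G r u v j := by
    simp only [dhatSet, Set.mem_ofPred_eq, addEdge_eq_self huv]
    exact ⟨hcard, hv, hu, hdom, rfl⟩
  have hj : j ∈ Icc 1 r := by
    refine mem_Icc.2 ⟨(Set.ncard_pos (Set.toFinite _)).2 ⟨v, huv, hv⟩, hcard ▸ ?_⟩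
    exact (Set.ncard_le_ncard Set.inter_subset_right (Set.toFinite _)).trans
      (Set.ncard_coe_finset D).le
  have := single_le_sum (fun i _ => by split <;> positivity) hj (f := fun i =>
    if D ∈ dhatSet G r u v i then (i : ℝ)⁻¹ else 0)
  simpa only [damageWeight, hmem, if_true] using this

lemma one_le_sum_symmetrize_damageWeight {A : Finset (Sym2 V)} {D : Finset V}
    (hcard : D.card = r) (hdom : isDomSet G ↑D)
    (hbad : ¬isDomSet (G.deleteEdges (↑A : Set (Sym2 V))) ↑D) :
    1 ≤ ∑ e ∈ A, symmetrize (damageWeight G r D) e := by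
  classical
  obtain ⟨u, hu, hlost⟩ : ∃ u ∉ D, ∀ v ∈ D, ¬(G.deleteEdges ↑A).Adj v u := by
    simpa [isDomSet] using hbad
  set J := {v ∈ D | G.Adj u v}
  have hJ : (G.neighborSet u ∩ ↑D).ncard = J.card := by
    rw [← Set.ncard_coe_finset, coe_filter]
    congr 1
    ext w
    simp [and_comm]
  have hJpos : 0 < J.card := by
    obtain ⟨v, hv, hvu⟩ := hdom u hu
    exact card_pos.2 ⟨v, mem_filter.2 ⟨hv, hvu.symm⟩⟩
  have hedge : ∀ v ∈ J, s(u, v) ∈ A := fun v hv => by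
    obtain ⟨hvD, huv⟩ := mem_filter.1 hv
    simpa [Sym2.eq_swap, huv.symm] using hlost v hvD
  have hinj : Set.InjOn (fun v => s(u, v)) J := fun _ _ _ _ h =>
    Sym2.congr_right.1 h
  calc (1 : ℝ) = ∑ _v ∈ J, (J.card : ℝ)⁻¹ := by
        rw [sum_const, nsmul_eq_mul, mul_inv_cancel₀ (by exact_mod_cast hJpos.ne')]
    _ ≤ ∑ v ∈ J, symmetrize (damageWeight G r D) s(u, v) := by
        refine sum_le_sum fun v hv => ?_
        obtain ⟨hvD, huv⟩ := mem_filter.1 hv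
        rw [← hJ]
        exact (inv_ncard_le_damageWeight hcard hdom hu hvD huv).trans
          (le_symmetrize_mk (damageWeight_nonneg G r D) u v)
    _ = ∑ e ∈ J.image (fun v => s(u, v)), symmetrize (damageWeight G r D) e :=
        (sum_image hinj).symm
    _ ≤ ∑ e ∈ A, symmetrize (damageWeight G r D) e :=
        sum_le_sum_of_subset_of_nonneg (image_subset_iff.2 hedge)
          fun e _ _ => symmetrize_nonneg (damageWeight_nonneg G r D) e

end Damage

theorem damage_bound_general {V : Type*} [Fintype V] (G : SimpleGraph V) (r : ℕ)
    (A : Finset (Sym2 V)) :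
    ({D : Finset V | D.card = r ∧ isDomSet G ↑D ∧
        ¬isDomSet (G.deleteEdges (↑A : Set (Sym2 V))) ↑D}.ncard : ℝ) ≤
      ∑ e ∈ A, Sym2.lift
        ⟨fun u v => damage G r u v + damage G r v u, fun u v => add_comm _ _⟩ e := by
  classical
  set Y := {D : Finset V | D.card = r ∧ isDomSet G ↑D ∧
    ¬isDomSet (G.deleteEdges (↑A : Set (Sym2 V))) ↑D}
  have hdamage : damage G r = fun u v => ∑ D : Finset V, damageWeight G r D u v :=
    funext₂ (damage_eq_sum_damageWeight G r)
  have hweight_nonneg (D : Finset V) : 0 ≤ ∑ e ∈ A, symmetrize (damageWeight G r D) e :=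
    sum_nonneg fun e _ => symmetrize_nonneg (damageWeight_nonneg G r D) e
  change (Y.ncard : ℝ) ≤ ∑ e ∈ A, symmetrize (damage G r) e
  calc (Y.ncard : ℝ) = ∑ _D ∈ Y.toFinset, (1 : ℝ) := by simp [Set.ncard_eq_toFinset_card']
    _ ≤ ∑ D ∈ Y.toFinset, ∑ e ∈ A, symmetrize (damageWeight G r D) e :=
        sum_le_sum fun D hD => by
          obtain ⟨hcard, hdom, hbad⟩ := Set.mem_toFinset.1 hD
          exact one_le_sum_symmetrize_damageWeight hcard hdom hbad
    _ ≤ ∑ D, ∑ e ∈ A, symmetrize (damageWeight G r D) e :=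
        sum_le_sum_of_subset_of_nonneg (subset_univ _) fun D _ _ => hweight_nonneg D
    _ = ∑ e ∈ A, symmetrize (damage G r) e := by
        simp only [hdamage, symmetrize_sum]
        exact sum_comm

/-- Deterministic damage bound: for any finite graph `G`, any `r > 0` and any
set `A` of unordered pairs of distinct vertices, the number `Y_A` of dominating sets of `G` of
cardinality `r` that are no longer dominating in `G − A` is at most the total damage
`Z_A = Σ_{{u,v}∈A} (Z(u,v) + Z(v,u))`. -/
theorem damage_bound {V : Type*} [Fintype V] (G : SimpleGraph V) (r : ℕ) (hr : 0 < r)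
    (A : Finset (Sym2 V)) (hA : ∀ e ∈ A, ¬e.IsDiag) :
    ({D : Finset V | D.card = r ∧ isDomSet G ↑D ∧
        ¬isDomSet (G.deleteEdges (↑A : Set (Sym2 V))) ↑D}.ncard : ℝ) ≤
      ∑ e ∈ A, Sym2.lift
        ⟨fun u v => damage G r u v + damage G r v u, fun u v => add_comm _ _⟩ e :=
  damage_bound_general G r A
end
end

section
/- Let p = p_n ∈ (0,1) satisfy n·p_n/log n → ∞. Then for every δ > 0, as n → ∞ the probability that G(n,p_n) has at least one edge and b(G(n,p_n)) ≤ (2+δ)·p_n·n tends to 1. -/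
open Filter Real Topology

open Finset SimpleGraph

/-!
Deleting every edge at the two ends of an edge `uv` isolates `u` and `v`, which raises the
domination number; hence `b(G) ≤ deg u + deg v - 1 ≤ 2 Δ(G)` as soon as `G` has an edge.
In `G(n,p)` each degree is `Bin(n - 1, p)`, with `E[t ^ deg v] = (p t + 1 - p) ^ (n - 1)`.
Markov's inequality for `(1 + ε) ^ deg v` gives Chernoff's bound
`P(deg v > (1 + ε) p n) ≤ exp (-h(ε) p n)` with `h(ε) > 0`, and since `p n ≫ log n` a union
bound over the `n` vertices shows `Δ ≤ (1 + δ/2) p n` a.a.s.; the graph is edgeless with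
probability `(1 - p) ^ C(n,2) → 0`.
-/


section Domination

variable {V : Type*}

lemma mem_of_isDomSet_of_isolated {G : SimpleGraph V} {D : Set V} (hD : isDomSet G D) {u : V}
    (hu : ∀ w, ¬ G.Adj w u) : u ∈ D := by
  by_contra h
  obtain ⟨w, -, hw⟩ := hD u h
  exact hu w hw

variable [Fintype V]

lemma exists_card_eq_domNumber (G : SimpleGraph V) :
    ∃ D : Finset V, D.card = domNumber G ∧ isDomSet G D :=
  Nat.sInf_mem (s := {k | ∃ D : Finset V, D.card = k ∧ isDomSet G D})
    ⟨_, univ, rfl, fun v hv => (hv (mem_coe.2 (mem_univ v))).elim⟩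

lemma domNumber_le_card {G : SimpleGraph V} {D : Finset V} (hD : isDomSet G D) :
    domNumber G ≤ D.card :=
  Nat.sInf_le ⟨D, rfl, hD⟩

/-- A minimum dominating set of `H` contains both isolated ends of `uv`, and without `v` it still
dominates `G`, where `u` dominates `v`. -/
lemma domNumber_lt_of_isolated {G H : SimpleGraph V} (hHG : H ≤ G) {u v : V} (huv : G.Adj u v)
    (hu : ∀ w, ¬ H.Adj w u) (hv : ∀ w, ¬ H.Adj w v) : domNumber G < domNumber H := by
  classical
  obtain ⟨D, hcard, hD⟩ := exists_card_eq_domNumber H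
  have hvD : v ∈ D := mem_of_isDomSet_of_isolated hD hv
  have hdom : isDomSet G ↑(D.erase v) := by
    intro w hw
    by_cases hwv : w = v
    · subst hwv
      exact ⟨u, by simp [mem_of_isDomSet_of_isolated hD hu, huv.ne], huv⟩
    · obtain ⟨x, hx, hxw⟩ := hD w (by simpa [hwv] using hw)
      have hxv : x ≠ v := by
        rintro rfl
        exact hv w hxw.symm
      exact ⟨x, by simpa [hxv] using hx, hHG hxw⟩
  calc domNumber G ≤ (D.erase v).card := domNumber_le_card hdom
    _ < D.card := card_erase_lt_of_mem hvD
    _ = domNumber H := hcard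

/-- Deleting every edge at `u` or `v` isolates both ends of the edge `uv`. -/
theorem bondage_le_degree_add_degree_sub_one [DecidableEq V] (G : SimpleGraph V)
    [DecidableRel G.Adj] {u v : V} (huv : G.Adj u v) :
    bondage G ≤ G.degree u + G.degree v - 1 := by
  set B := G.incidenceFinset u ∪ G.incidenceFinset v
  have hB : (B : Set (Sym2 V)) ⊆ G.edgeSet := by
    simpa [B] using ⟨G.incidenceSet_subset u, G.incidenceSet_subset v⟩
  have hinter : G.incidenceFinset u ∩ G.incidenceFinset v = {s(u, v)} := by
    apply coe_injective
    simpa using G.incidenceSet_inter_incidenceSet_of_adj huv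
  have hcard : B.card = G.degree u + G.degree v - 1 := by
    have := card_union_add_card_inter (G.incidenceFinset u) (G.incidenceFinset v)
    simp only [hinter, card_singleton, card_incidenceFinset_eq_degree] at this
    change #(G.incidenceFinset u ∪ G.incidenceFinset v) = _
    omega
  have hisolated : ∀ x w, x = u ∨ x = v → ¬ (G.deleteEdges B).Adj w x := by
    intro x w hx hwx
    rw [deleteEdges_adj] at hwx
    have hmem : s(w, x) ∈ G.incidenceSet x := ⟨hwx.1, Sym2.mem_mk_right w x⟩
    rcases hx with rfl | rfl <;> simp_all [B]
  calc bondage G ≤ B.card :=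
        Nat.sInf_le ⟨B, rfl, hB, domNumber_lt_of_isolated (G.deleteEdges_le _) huv
          (fun w => hisolated u w (.inl rfl)) (fun w => hisolated v w (.inr rfl))⟩
    _ = G.degree u + G.degree v - 1 := hcard

end Domination

section EdgeProducts

open scoped Classical

variable {V : Type*} [Fintype V] [DecidableEq V] {R : Type*} [CommSemiring R]

lemma filter_mem_edgeSet_edgeFinset_top (G : SimpleGraph V) :
    {e ∈ (⊤ : SimpleGraph V).edgeFinset | e ∈ G.edgeSet} = G.edgeFinset := by
  ext e
  simpa using fun he => G.not_isDiag_of_mem_edgeSet he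

/-- A graph on `V` is a subset of the edges of `⊤`, so the left side is the expansion of the
right one. -/
lemma sum_prod_ite_mem_edgeSet (f g : Sym2 V → R) :
    ∑ G : SimpleGraph V, ∏ e ∈ (⊤ : SimpleGraph V).edgeFinset,
        (if e ∈ G.edgeSet then f e else g e) =
      ∏ e ∈ (⊤ : SimpleGraph V).edgeFinset, (f e + g e) := by
  rw [prod_add]
  refine sum_nbij' (fun G => G.edgeFinset) (fun t => fromEdgeSet t) ?_ ?_ ?_ ?_ ?_
  · exact fun G _ => mem_powerset.2 (edgeFinset_mono le_top)
  · simp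
  · simp
  · intro t ht
    ext e
    simp only [mem_powerset] at ht
    simpa [edgeSet_fromEdgeSet] using fun he => by simpa using ht he
  · intro G _
    rw [prod_ite, filter_mem_edgeSet_edgeFinset_top, filter_not, filter_mem_edgeSet_edgeFinset_top]

lemma prod_ite_mem_incidenceSet (G : SimpleGraph V) [DecidableRel G.Adj] (v : V) (x : R) :
    ∏ e ∈ (⊤ : SimpleGraph V).edgeFinset, (if e ∈ G.incidenceSet v then x else 1) =
      x ^ G.degree v := by
  rw [← prod_filter, prod_const, ← card_incidenceFinset_eq_degree]
  congr 2
  ext e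
  simpa using fun he => G.not_isDiag_of_mem_edgeSet (G.incidenceSet_subset v he)

end EdgeProducts

section ErdosRenyi

open scoped Classical

variable {n : ℕ} {p : ℝ}

lemma erWeight_eq_prod (G : SimpleGraph (Fin n)) :
    erWeight n p G =
      ∏ e ∈ (⊤ : SimpleGraph (Fin n)).edgeFinset, if e ∈ G.edgeSet then p else 1 - p := by
  rw [prod_ite, filter_mem_edgeSet_edgeFinset_top, filter_not, filter_mem_edgeSet_edgeFinset_top,
    prod_const, prod_const, card_sdiff_of_subset (edgeFinset_mono le_top),
    card_edgeFinset_top_eq_card_choose_two, Fintype.card_fin, erWeight,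
    Set.ncard_eq_toFinset_card', Set.toFinset_card, edgeFinset, Set.toFinset_card]

lemma sum_erWeight_mul_prod (f g : Sym2 (Fin n) → ℝ) :
    ∑ G : SimpleGraph (Fin n), erWeight n p G *
        ∏ e ∈ (⊤ : SimpleGraph (Fin n)).edgeFinset, (if e ∈ G.edgeSet then f e else g e) =
      ∏ e ∈ (⊤ : SimpleGraph (Fin n)).edgeFinset, (p * f e + (1 - p) * g e) := by
  rw [← sum_prod_ite_mem_edgeSet]
  refine sum_congr rfl fun G _ => ?_
  rw [erWeight_eq_prod, ← prod_mul_distrib]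
  exact prod_congr rfl fun e _ => by split_ifs <;> rfl

lemma sum_erWeight : ∑ G : SimpleGraph (Fin n), erWeight n p G = 1 := by
  simpa using sum_erWeight_mul_prod (n := n) (p := p) 1 1

lemma erExp_pow_degree (v : Fin n) (t : ℝ) :
    erExp n p (fun G => t ^ G.degree v) = (p * t + (1 - p)) ^ (n - 1) := by
  have hprod (G : SimpleGraph (Fin n)) : t ^ G.degree v =
      ∏ e ∈ (⊤ : SimpleGraph (Fin n)).edgeFinset,
        (if e ∈ G.edgeSet then (if v ∈ e then t else 1) else 1) := by
    rw [← prod_ite_mem_incidenceSet]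
    exact prod_congr rfl fun e _ => by simp only [incidenceSet, Set.mem_sep_iff, ite_and]
  have htop : ∀ e ∈ (⊤ : SimpleGraph (Fin n)).edgeFinset,
      p * (if v ∈ e then t else 1) + (1 - p) * 1 =
        if e ∈ (⊤ : SimpleGraph (Fin n)).incidenceSet v then p * t + (1 - p) else 1 := by
    intro e he
    have hdiag := (⊤ : SimpleGraph (Fin n)).not_isDiag_of_mem_edgeSet (mem_edgeFinset.1 he)
    by_cases hv : v ∈ e <;> simp [incidenceSet, hdiag, hv]
  simp only [erExp, hprod, sum_erWeight_mul_prod]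
  rw [prod_congr rfl htop, prod_ite_mem_incidenceSet,
    show (⊤ : SimpleGraph (Fin n)).degree v = n - 1 by simp]

end ErdosRenyi

section Probability

variable {n : ℕ} {p : ℝ}

lemma erWeight_nonneg (h0 : 0 ≤ p) (h1 : p ≤ 1) (G : SimpleGraph (Fin n)) :
    0 ≤ erWeight n p G :=
  mul_nonneg (pow_nonneg h0 _) (pow_nonneg (sub_nonneg.2 h1) _)

lemma erProb_singleton (G : SimpleGraph (Fin n)) : erProb n p {G} = erWeight n p G := by
  classical
  simp [erProb, Set.indicator_apply]

lemma erProb_bot : erProb n p {⊥} = (1 - p) ^ n.choose 2 := by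
  simp [erProb_singleton, erWeight]

lemma erProb_compl (S : Set (SimpleGraph (Fin n))) : erProb n p Sᶜ = 1 - erProb n p S := by
  rw [eq_sub_iff_add_eq, erProb, erProb, ← sum_add_distrib, ← sum_erWeight (p := p)]
  exact sum_congr rfl fun G _ => Set.indicator_compl_add_self_apply S _ G

lemma erProb_nonneg (h0 : 0 ≤ p) (h1 : p ≤ 1) (S : Set (SimpleGraph (Fin n))) :
    0 ≤ erProb n p S :=
  sum_nonneg fun G _ => Set.indicator_nonneg (fun G _ => erWeight_nonneg h0 h1 G) G

lemma erProb_le_one (h0 : 0 ≤ p) (h1 : p ≤ 1) (S : Set (SimpleGraph (Fin n))) :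
    erProb n p S ≤ 1 := by
  linarith [erProb_compl (p := p) S, erProb_nonneg h0 h1 Sᶜ]

lemma erProb_mono (h0 : 0 ≤ p) (h1 : p ≤ 1) {S T : Set (SimpleGraph (Fin n))} (h : S ⊆ T) :
    erProb n p S ≤ erProb n p T :=
  sum_le_sum fun G _ => Set.indicator_le_indicator_of_subset h (erWeight_nonneg h0 h1) G

lemma erProb_union_le (h0 : 0 ≤ p) (h1 : p ≤ 1) (S T : Set (SimpleGraph (Fin n))) :
    erProb n p (S ∪ T) ≤ erProb n p S + erProb n p T := by
  rw [erProb, erProb, erProb, ← sum_add_distrib]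
  refine sum_le_sum fun G _ => ?_
  rw [← Set.indicator_union_add_inter_apply]
  exact le_add_of_nonneg_right (Set.indicator_nonneg (fun G _ => erWeight_nonneg h0 h1 G) G)

lemma erProb_iUnion_le (h0 : 0 ≤ p) (h1 : p ≤ 1) {ι : Type*} [Fintype ι]
    (S : ι → Set (SimpleGraph (Fin n))) :
    erProb n p (⋃ i, S i) ≤ ∑ i, erProb n p (S i) := by
  simp only [erProb]
  rw [sum_comm]
  refine sum_le_sum fun G _ => ?_
  have hnonneg i : 0 ≤ (S i).indicator (erWeight n p) G :=
    Set.indicator_nonneg (fun G _ => erWeight_nonneg h0 h1 G) G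
  by_cases hG : G ∈ ⋃ i, S i
  · obtain ⟨i, hi⟩ := Set.mem_iUnion.1 hG
    rw [Set.indicator_of_mem hG, ← Set.indicator_of_mem hi (erWeight n p)]
    exact single_le_sum (fun i _ => hnonneg i) (mem_univ i)
  · rw [Set.indicator_of_notMem hG]
    exact sum_nonneg fun i _ => hnonneg i

lemma mul_erProb_le_erExp (h0 : 0 ≤ p) (h1 : p ≤ 1) {S : Set (SimpleGraph (Fin n))}
    {X : SimpleGraph (Fin n) → ℝ} {t : ℝ} (hX : ∀ G, 0 ≤ X G) (hS : ∀ G ∈ S, t ≤ X G) :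
    t * erProb n p S ≤ erExp n p X := by
  rw [erProb, mul_sum]
  refine sum_le_sum fun G _ => ?_
  by_cases hG : G ∈ S
  · rw [Set.indicator_of_mem hG, mul_comm]
    exact mul_le_mul_of_nonneg_left (hS G hG) (erWeight_nonneg h0 h1 G)
  · rw [Set.indicator_of_notMem hG, mul_zero]
    exact mul_nonneg (erWeight_nonneg h0 h1 G) (hX G)

end Probability

/-- The rate `h(ε)` in Chernoff's bound `P(Bin(m, p) > (1 + ε) m p) ≤ exp (-h(ε) m p)`. -/
noncomputable def chernoffExponent (ε : ℝ) : ℝ := (1 + ε) * Real.log (1 + ε) - ε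

lemma chernoffExponent_pos {ε : ℝ} (hε : 0 < ε) : 0 < chernoffExponent ε := by
  have h1 : 0 < 1 + ε := by linarith
  have hlog := Real.log_lt_sub_one_of_pos (inv_pos.2 h1) (by rw [Ne, inv_eq_one]; linarith)
  rw [Real.log_inv] at hlog
  have : (1 + ε) * (1 + ε)⁻¹ = 1 := mul_inv_cancel₀ h1.ne'
  unfold chernoffExponent
  nlinarith

section Chernoff

open scoped Classical

variable {n : ℕ} {p : ℝ}

theorem erProb_lt_degree_le (h0 : 0 ≤ p) (h1 : p ≤ 1) (v : Fin n) {ε : ℝ} (hε : 0 ≤ ε) :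
    erProb n p {G | (1 + ε) * (p * n) < G.degree v} ≤
      exp (-(chernoffExponent ε * (p * n))) := by
  set a := (1 + ε) * (p * n)
  set l := Real.log (1 + ε)
  have hl : 0 ≤ l := Real.log_nonneg (by linarith)
  have hexp : exp l = 1 + ε := Real.exp_log (by linarith)
  have hmarkov : exp (l * a) * erProb n p {G | a < G.degree v} ≤ (1 + p * ε) ^ (n - 1) := by
    have := mul_erProb_le_erExp h0 h1 (X := fun G => (1 + ε) ^ G.degree v) (t := exp (l * a))
      (fun G => by positivity) fun G hG => by
        rw [← hexp, ← Real.exp_nat_mul, mul_comm]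
        exact exp_le_exp.2 (mul_le_mul_of_nonneg_right (le_of_lt hG) hl)
    rwa [erExp_pow_degree, show p * (1 + ε) + (1 - p) = 1 + p * ε by ring] at this
  have hpow : (1 + p * ε) ^ (n - 1) ≤ exp (p * ε * n) := by
    calc (1 + p * ε) ^ (n - 1) ≤ exp (p * ε) ^ (n - 1) :=
          pow_le_pow_left₀ (by positivity) (by linarith [add_one_le_exp (p * ε)]) _
      _ = exp ((n - 1 : ℕ) * (p * ε)) := (Real.exp_nat_mul _ _).symm
      _ ≤ exp (p * ε * n) := by
          rw [mul_comm]
          exact exp_le_exp.2 (mul_le_mul_of_nonneg_left (by exact_mod_cast n.sub_le 1)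
            (by positivity))
  calc erProb n p {G | a < G.degree v}
      = exp (-(l * a)) * (exp (l * a) * erProb n p {G | a < G.degree v}) := by
        rw [← mul_assoc, ← exp_add, neg_add_cancel, exp_zero, one_mul]
    _ ≤ exp (-(l * a)) * exp (p * ε * n) :=
        mul_le_mul_of_nonneg_left (hmarkov.trans hpow) (exp_pos _).le
    _ = exp (-(chernoffExponent ε * (p * n))) := by
        rw [← exp_add, chernoffExponent]
        congr 1
        simp only [a, l]
        ring

end Chernoff

section RandomBondage

open scoped Classical

lemma compl_setOf_bondage_le_subset {V : Type*} [Fintype V] {a b : ℝ} (hab : 2 * a ≤ b) :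
    {G : SimpleGraph V | G.edgeSet.Nonempty ∧ (bondage G : ℝ) ≤ b}ᶜ ⊆
      {⊥} ∪ ⋃ v, {G | a < G.degree v} := by
  intro G hG
  by_cases hbot : G = ⊥
  · exact .inl hbot
  refine .inr (Set.mem_iUnion.2 ?_)
  by_contra! hdeg
  simp only [Set.mem_ofPred_eq, not_lt] at hdeg
  obtain ⟨⟨u, v⟩, huv⟩ := edgeSet_nonempty.2 hbot
  refine hG ⟨⟨_, huv⟩, ?_⟩
  have hb := (bondage_le_degree_add_degree_sub_one G huv).trans (Nat.sub_le _ _)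
  calc (bondage G : ℝ) ≤ G.degree u + G.degree v := by exact_mod_cast hb
    _ ≤ b := by linarith [hdeg u, hdeg v]

theorem one_sub_le_erProb_bondage_le {n : ℕ} {p δ : ℝ} (h0 : 0 ≤ p) (h1 : p ≤ 1) (hδ : 0 ≤ δ) :
    1 - ((1 - p) ^ n.choose 2 + n * exp (-(chernoffExponent (δ / 2) * (p * n)))) ≤
      erProb n p {G | G.edgeSet.Nonempty ∧ (bondage G : ℝ) ≤ (2 + δ) * p * n} := by
  rw [sub_le_comm, ← erProb_compl]
  calc _ ≤ erProb n p ({⊥} ∪ ⋃ v, {G | (1 + δ / 2) * (p * n) < G.degree v}) :=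
        erProb_mono h0 h1 (compl_setOf_bondage_le_subset (by linarith))
    _ ≤ erProb n p {⊥} + ∑ v, erProb n p {G | (1 + δ / 2) * (p * n) < G.degree v} :=
        (erProb_union_le h0 h1 _ _).trans (by gcongr; exact erProb_iUnion_le h0 h1 _)
    _ ≤ _ := by
        rw [erProb_bot]
        grw [sum_le_sum fun v _ => erProb_lt_degree_le h0 h1 v (by positivity)]
        simp

end RandomBondage

section Asymptotics

variable {p : ℕ → ℝ}

lemma sub_one_le_choose_two (n : ℕ) : n - 1 ≤ n.choose 2 := by
  cases n with
  | zero => simp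
  | succ m =>
    rw [Nat.choose_succ_succ m 1, Nat.choose_one_right]
    omega

lemma tendsto_log_natCast_atTop : Tendsto (fun n : ℕ => Real.log n) atTop atTop :=
  tendsto_log_atTop.comp tendsto_natCast_atTop_atTop

lemma tendsto_mul_atTop_of_tendsto_div_log
    (hp : Tendsto (fun n : ℕ => (n : ℝ) * p n / Real.log n) atTop atTop) :
    Tendsto (fun n : ℕ => p n * n) atTop atTop := by
  refine (hp.atTop_mul_atTop₀ tendsto_log_natCast_atTop).congr' ?_
  filter_upwards [eventually_gt_atTop 1] with n hn
  have : Real.log n ≠ 0 := (Real.log_pos (by exact_mod_cast hn)).ne'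
  field_simp

lemma tendsto_one_sub_pow_choose_two (hp01 : ∀ n, p n ∈ Set.Icc (0 : ℝ) 1)
    (hp : Tendsto (fun n : ℕ => p n * n) atTop atTop) :
    Tendsto (fun n : ℕ => (1 - p n) ^ n.choose 2) atTop (𝓝 0) := by
  have hlim : Tendsto (fun n : ℕ => exp (-(p n * n - 1))) atTop (𝓝 0) :=
    tendsto_exp_neg_atTop_nhds_zero.comp (tendsto_atTop_add_const_right _ (-1) hp)
  refine squeeze_zero (fun n => pow_nonneg (sub_nonneg.2 (hp01 n).2) _) (fun n => ?_) hlim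
  obtain ⟨h0, h1⟩ := hp01 n
  have hn : (n : ℝ) ≤ (n - 1 : ℕ) + 1 := by exact_mod_cast (by omega : n ≤ n - 1 + 1)
  calc (1 - p n) ^ n.choose 2 ≤ (1 - p n) ^ (n - 1) :=
        pow_le_pow_of_le_one (by linarith) (by linarith) (sub_one_le_choose_two n)
    _ ≤ exp (-p n) ^ (n - 1) :=
        pow_le_pow_left₀ (by linarith) (by linarith [add_one_le_exp (-p n)]) _
    _ = exp (-(p n * (n - 1 : ℕ))) := by rw [← Real.exp_nat_mul]; ring_nf
    _ ≤ exp (-(p n * n - 1)) := exp_le_exp.2 (by nlinarith)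

lemma tendsto_natCast_mul_exp_neg
    (hp : Tendsto (fun n : ℕ => (n : ℝ) * p n / Real.log n) atTop atTop) {c : ℝ} (hc : 0 < c) :
    Tendsto (fun n : ℕ => n * exp (-(c * (p n * n)))) atTop (𝓝 0) := by
  have h : Tendsto (fun n : ℕ => Real.log n * (c * (n * p n / Real.log n) - 1)) atTop atTop :=
    tendsto_log_natCast_atTop.atTop_mul_atTop₀
      (tendsto_atTop_add_const_right _ (-1) (hp.const_mul_atTop hc))
  refine (tendsto_exp_neg_atTop_nhds_zero.comp h).congr' ?_
  filter_upwards [eventually_gt_atTop 1] with n hn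
  have hn0 : (0 : ℝ) < n := by positivity
  have hlog : Real.log n ≠ 0 := (Real.log_pos (by exact_mod_cast hn)).ne'
  rw [Function.comp_apply, show -(Real.log n * (c * (n * p n / Real.log n) - 1)) =
    Real.log n + -(c * (p n * n)) by field_simp; ring, exp_add, exp_log hn0]

end Asymptotics

/-- If `n p_n / log n → ∞`, then for every `δ > 0`, a.a.s. `G(n,p_n)` has an
edge and `b(G(n,p_n)) ≤ (2+δ) p_n n`. -/
theorem bondage_trivial_upper (p : ℕ → ℝ) (hp01 : ∀ n, p n ∈ Set.Ioo (0 : ℝ) 1)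
    (hp : Tendsto (fun n : ℕ => (n : ℝ) * p n / Real.log n) atTop atTop)
    (δ : ℝ) (hδ : 0 < δ) :
    Tendsto (fun n : ℕ => erProb n (p n)
        {G : SimpleGraph (Fin n) |
          G.edgeSet.Nonempty ∧ (bondage G : ℝ) ≤ (2 + δ) * p n * n})
      atTop (𝓝 1) := by
  have hp01' n : p n ∈ Set.Icc (0 : ℝ) 1 := Set.Ioo_subset_Icc_self (hp01 n)
  have hfail : Tendsto (fun n : ℕ => (1 - p n) ^ n.choose 2 +
      n * exp (-(chernoffExponent (δ / 2) * (p n * n)))) atTop (𝓝 0) := by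
    simpa using
      (tendsto_one_sub_pow_choose_two hp01' (tendsto_mul_atTop_of_tendsto_div_log hp)).add
        (tendsto_natCast_mul_exp_neg hp (chernoffExponent_pos (half_pos hδ)))
  refine tendsto_of_tendsto_of_tendsto_of_le_of_le (by simpa using tendsto_const_nhds.sub hfail)
    tendsto_const_nhds (fun n => ?_) (fun n => erProb_le_one (hp01' n).1 (hp01' n).2 _)
  exact one_sub_le_erProb_bondage_le (hp01' n).1 (hp01' n).2 hδ.le
end
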